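/- arXiv:1112.4649 — 11 statements merged into one kernel-verified Lean document; each statement's English description precedes it below -/
import Mathlib

section
/- Let G satisfy the general conditions on the nonlinearity. If G(y)/y is unbounded on (0,∞), then there exists β₀ > 0 such that for every β with 0 < β ≤ β₀ the map y ↦ G(βy) has a nonzero fixed point, i.e. there exists y > 0 with G(βy) = y. -/
/-! Substituting `z = β y`, a fixed point of `y ↦ G (β y)` is a positive solution of
`G z = β⁻¹ z`. For small `β` the line `z ↦ β⁻¹ z` lies above `G` at `z = 1`, while
unboundedness of `G z / z` puts `G` above the line somewhere; the intermediate value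
theorem on `(0, ∞)` gives the crossing. -/

open Set

lemma exists_pos_eq_const_mul_of_continuousOn {f : ℝ → ℝ} {c a b : ℝ}
    (hf : ContinuousOn f (Ioi 0)) (ha : 0 < a) (hb : 0 < b)
    (hfa : f a ≤ c * a) (hfb : c * b ≤ f b) : ∃ z > 0, f z = c * z :=
  isPreconnected_Ioi.intermediate_value₂ ha hb hf (continuousOn_const.mul continuousOn_id)
    hfa hfb

lemma exists_pos_map_mul_eq_of_map_eq_inv_mul {G : ℝ → ℝ} {β z : ℝ} (hβ : 0 < β)
    (hz : 0 < z) (hGz : G z = β⁻¹ * z) : ∃ y > 0, G (β * y) = y :=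
  ⟨β⁻¹ * z, by positivity, by rwa [mul_inv_cancel_left₀ hβ.ne']⟩

theorem lemma1_unbounded_implies_i_general (G : ℝ → ℝ)
    (hG_cont : ContinuousOn G (Set.Ici 0))
    (hG_unb : ∀ M > (0:ℝ), ∃ y > (0:ℝ), G y > M * y) :
    ∃ β₀ > (0:ℝ), ∀ β : ℝ, 0 < β → β ≤ β₀ → ∃ y > (0:ℝ), G (β * y) = y := by
  refine ⟨(|G 1| + 1)⁻¹, by positivity, fun β hβ hββ₀ => ?_⟩
  have hG1 : G 1 ≤ β⁻¹ * 1 := by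
    have : |G 1| + 1 ≤ β⁻¹ := (le_inv_comm₀ hβ (by positivity)).mp hββ₀
    linarith [le_abs_self (G 1)]
  obtain ⟨b, hb, hGb⟩ := hG_unb β⁻¹ (inv_pos.mpr hβ)
  obtain ⟨z, hz, hGz⟩ := exists_pos_eq_const_mul_of_continuousOn
    (hG_cont.mono Ioi_subset_Ici_self) one_pos hb hG1 hGb.le
  exact exists_pos_map_mul_eq_of_map_eq_inv_mul hβ hz hGz

/-- Lemma 1, direction "unbounded ⇒ (i)": if `G` satisfies the general conditions on the
nonlinearity and `G y / y` is unbounded on `(0, ∞)`, then there exists `β₀ > 0` such that for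
every `0 < β ≤ β₀` the map `y ↦ G (β * y)` has a nonzero fixed point. -/
theorem lemma1_unbounded_implies_i (G : ℝ → ℝ)
    (hG_cont : ContinuousOn G (Set.Ici 0))
    (hG_mono : StrictMonoOn G (Set.Ici 0))
    (hG_nonneg : ∀ y ≥ (0:ℝ), 0 ≤ G y)
    (hG0 : G 0 = 0)
    (hG_unb : ∀ M > (0:ℝ), ∃ y > (0:ℝ), G y > M * y) :
    ∃ β₀ > (0:ℝ), ∀ β : ℝ, 0 < β → β ≤ β₀ → ∃ y > (0:ℝ), G (β * y) = y :=
  lemma1_unbounded_implies_i_general G hG_cont hG_unb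
end

section
/- Let G satisfy the general conditions on the nonlinearity. If G(y)/y is unbounded on (0,∞), then for every A ≥ 0 there exists β_A > 0 such that for all α with 0 ≤ α ≤ A and all β with 0 < β ≤ β_A there exists y > 0 with G(α + βy) = y. -/
/-! With `y₁ = G (A + 1) + 1` and `β ≤ 1 / y₁`, monotonicity gives `G (α + β y₁) ≤ G (A + 1) < y₁`,
so `y ↦ G (α + β y)` lies below the diagonal at `y₁`; superlinear growth of `G` puts it above the
diagonal at some other positive point, and the intermediate value theorem yields a fixed point. -/

open Set

theorem exists_pos_eq_self_of_le_of_le {g : ℝ → ℝ} (hg : ContinuousOn g (Ioi 0)) {a b : ℝ}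
    (ha : 0 < a) (hb : 0 < b) (hga : g a ≤ a) (hgb : b ≤ g b) : ∃ y > 0, g y = y := by
  have hsub : uIcc a b ⊆ Ioi 0 := fun y hy => lt_of_lt_of_le (lt_min ha hb) hy.1
  have hcont : ContinuousOn (fun y => g y - y) (uIcc a b) :=
    (hg.mono hsub).sub continuousOn_id
  have hzero : (0 : ℝ) ∈ uIcc (g a - a) (g b - b) :=
    mem_uIcc.2 (Or.inl ⟨by linarith, by linarith⟩)
  obtain ⟨y, hy, hfy⟩ := intermediate_value_uIcc hcont hzero
  exact ⟨y, hsub hy, by linarith [hfy]⟩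

theorem exists_pos_lt_apply_affine_of_unbounded {G : ℝ → ℝ} (hG : MonotoneOn G (Ici 0))
    (hG_unb : ∀ M > (0:ℝ), ∃ y > (0:ℝ), G y > M * y) {α β : ℝ} (hα : 0 ≤ α) (hβ : 0 < β) :
    ∃ y > 0, y < G (α + β * y) := by
  obtain ⟨z, hz, hGz⟩ := hG_unb β⁻¹ (inv_pos.2 hβ)
  have hβz : β * (β⁻¹ * z) = z := by field_simp
  refine ⟨β⁻¹ * z, by positivity, ?_⟩
  calc β⁻¹ * z < G z := hGz
    _ ≤ G (α + β * (β⁻¹ * z)) := by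
      rw [hβz]
      exact hG (mem_Ici.2 hz.le) (mem_Ici.2 (by linarith)) (by linarith)

theorem lemma1_unbounded_implies_ii_general (G : ℝ → ℝ)
    (hG_cont : ContinuousOn G (Set.Ici 0))
    (hG_mono : StrictMonoOn G (Set.Ici 0))
    (hG_nonneg : ∀ y ≥ (0:ℝ), 0 ≤ G y)
    (hG_unb : ∀ M > (0:ℝ), ∃ y > (0:ℝ), G y > M * y) :
    ∀ A ≥ (0:ℝ), ∃ βA > (0:ℝ), ∀ α β : ℝ, 0 ≤ α → α ≤ A → 0 < β → β ≤ βA →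
      ∃ y > (0:ℝ), G (α + β * y) = y := by
  intro A hA
  set y₁ := G (A + 1) + 1
  have hy₁ : 0 < y₁ := by linarith [hG_nonneg (A + 1) (by linarith)]
  refine ⟨y₁⁻¹, inv_pos.2 hy₁, fun α β hα hαA hβ hββ => ?_⟩
  have hβy₁ : β * y₁ ≤ 1 := by
    calc β * y₁ ≤ y₁⁻¹ * y₁ := by gcongr
      _ = 1 := inv_mul_cancel₀ hy₁.ne'
  have hbelow : G (α + β * y₁) ≤ y₁ := by
    have := hG_mono.monotoneOn (mem_Ici.2 (by positivity)) (mem_Ici.2 (by linarith))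
      (by linarith : α + β * y₁ ≤ A + 1)
    linarith
  obtain ⟨y₂, hy₂, habove⟩ := exists_pos_lt_apply_affine_of_unbounded hG_mono.monotoneOn hG_unb hα hβ
  have hcont : ContinuousOn (fun y => G (α + β * y)) (Ioi 0) :=
    hG_cont.comp (by fun_prop) fun y hy => mem_Ici.2 (by have := mem_Ioi.1 hy; positivity)
  exact exists_pos_eq_self_of_le_of_le hcont hy₁ hy₂ hbelow habove.le

/-- Lemma 1, direction "unbounded ⇒ (ii)": if `G` satisfies the general conditions on the
nonlinearity and `G y / y` is unbounded on `(0, ∞)`, then for every `A ≥ 0` there is `β_A > 0`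
such that for all `0 ≤ α ≤ A` and `0 < β ≤ β_A`, the map `y ↦ G (α + β * y)` has a nonzero
fixed point. -/
theorem lemma1_unbounded_implies_ii (G : ℝ → ℝ)
    (hG_cont : ContinuousOn G (Set.Ici 0))
    (hG_mono : StrictMonoOn G (Set.Ici 0))
    (hG_nonneg : ∀ y ≥ (0:ℝ), 0 ≤ G y)
    (hG0 : G 0 = 0)
    (hG_unb : ∀ M > (0:ℝ), ∃ y > (0:ℝ), G y > M * y) :
    ∀ A ≥ (0:ℝ), ∃ βA > (0:ℝ), ∀ α β : ℝ, 0 ≤ α → α ≤ A → 0 < β → β ≤ βA →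
      ∃ y > (0:ℝ), G (α + β * y) = y :=
  lemma1_unbounded_implies_ii_general G hG_cont hG_mono hG_nonneg hG_unb
end

section
/- Let G satisfy the general conditions on the nonlinearity. If G(y)/y is unbounded near zero but bounded away from zero, then there exists β₀ > 0 such that for every α ≥ 0 and every β with 0 < β ≤ β₀ there exists y > 0 with G(α + βy) = y. -/
/-!
The fixed points of `y ↦ G (α + β y)` are found by the intermediate value theorem. Since `G y / y`
is unbounded near zero, `G (α + β a) ≥ G (β a) > a` for a suitable `a > 0`. Since `G y ≤ M y` for
`y > 1`, taking `β ≤ 1 / (2M)` gives `G (α + β y) ≤ M α + y / 2 < y` for all large `y`.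
-/

open Set Filter

namespace Lemma2

variable {G : ℝ → ℝ} {α β : ℝ}

theorem exists_pos_lt_apply_add_mul (hG_mono : MonotoneOn G (Ici 0))
    (hG_unb : ∀ M > (0:ℝ), ∃ y > (0:ℝ), M * y < G y) (hα : 0 ≤ α) (hβ : 0 < β) :
    ∃ a > (0:ℝ), a < G (α + β * a) := by
  obtain ⟨z, hz, hzG⟩ := hG_unb β⁻¹ (inv_pos.2 hβ)
  refine ⟨β⁻¹ * z, by positivity, hzG.trans_le ?_⟩
  rw [mul_inv_cancel_left₀ hβ.ne']
  exact hG_mono hz.le (by simp only [mem_Ici]; linarith) (by linarith)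

theorem eventually_apply_add_mul_lt {t M : ℝ} (hG_bdd : ∀ y > t, G y ≤ M * y) (hβ : 0 < β)
    (hMβ : M * β < 1) : ∀ᶠ y in atTop, G (α + β * y) < y := by
  have h_large : ∀ᶠ y in atTop, t < α + β * y :=
    (tendsto_atTop_add_const_left _ α (tendsto_id.const_mul_atTop hβ)).eventually_gt_atTop t
  filter_upwards [h_large, eventually_gt_atTop (M * α / (1 - M * β))] with y hy hy'
  rw [div_lt_iff₀ (by linarith)] at hy'
  calc G (α + β * y) ≤ M * (α + β * y) := hG_bdd _ hy
    _ < y := by linarith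

end Lemma2

open Lemma2 in
theorem lemma2_existence_general (G : ℝ → ℝ)
    (hG_cont : ContinuousOn G (Set.Ici 0))
    (hG_mono : StrictMonoOn G (Set.Ici 0))
    (hG_unb0 : ∀ δ > (0:ℝ), ∀ M > (0:ℝ), ∃ y : ℝ, 0 < y ∧ y < δ ∧ G y > M * y)
    (hG_bdd : ∀ t > (0:ℝ), ∃ M > (0:ℝ), ∀ y > t, G y ≤ M * y) :
    ∃ β₀ > (0:ℝ), ∀ α ≥ (0:ℝ), ∀ β : ℝ, 0 < β → β ≤ β₀ →
      ∃ y > (0:ℝ), G (α + β * y) = y := by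
  obtain ⟨M, hM, hMle⟩ := hG_bdd 1 one_pos
  refine ⟨1 / (2 * M), by positivity, fun α hα β hβ hββ₀ => ?_⟩
  have hMβ : M * β < 1 := by
    calc M * β ≤ M * (1 / (2 * M)) := mul_le_mul_of_nonneg_left hββ₀ hM.le
      _ = 1 / 2 := by field_simp
      _ < 1 := by norm_num
  obtain ⟨a, ha, haG⟩ := exists_pos_lt_apply_add_mul hG_mono.monotoneOn
    (fun M hM => (hG_unb0 1 one_pos M hM).imp fun _ ⟨hy, _, hGy⟩ => ⟨hy, hGy⟩) hα hβ
  obtain ⟨N, hN⟩ := eventually_atTop.1 (eventually_apply_add_mul_lt (α := α) hMle hβ hMβ)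
  have hcont : ContinuousOn (fun y => G (α + β * y)) (Icc a (max a N)) :=
    hG_cont.comp (by fun_prop) fun y hy => by
      simp only [mem_Ici]; nlinarith [hy.1]
  obtain ⟨c, hc, hfix⟩ := exists_mem_Icc_isFixedPt hcont (le_max_left a N) haG.le
    (hN _ (le_max_right a N)).le
  exact ⟨c, ha.trans_le hc.1, hfix⟩

/-- Lemma 2, existence part: if `G` satisfies the general conditions on the nonlinearity and
`G y / y` is unbounded near zero but bounded away from zero, then there exists `β₀ > 0` such
that for every `α ≥ 0` and every `0 < β ≤ β₀`, the map `y ↦ G (α + β * y)` has a nonzero fixed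
point. -/
theorem lemma2_existence (G : ℝ → ℝ)
    (hG_cont : ContinuousOn G (Set.Ici 0))
    (hG_mono : StrictMonoOn G (Set.Ici 0))
    (hG_nonneg : ∀ y ≥ (0:ℝ), 0 ≤ G y)
    (hG0 : G 0 = 0)
    (hG_unb0 : ∀ δ > (0:ℝ), ∀ M > (0:ℝ), ∃ y : ℝ, 0 < y ∧ y < δ ∧ G y > M * y)
    (hG_bdd : ∀ t > (0:ℝ), ∃ M > (0:ℝ), ∀ y > t, G y ≤ M * y) :
    ∃ β₀ > (0:ℝ), ∀ α ≥ (0:ℝ), ∀ β : ℝ, 0 < β → β ≤ β₀ →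
      ∃ y > (0:ℝ), G (α + β * y) = y :=
  lemma2_existence_general G hG_cont hG_mono hG_unb0 hG_bdd
end

section
/- Let G satisfy the general conditions on the nonlinearity. If G(y)/y is unbounded near zero and there exists a sequence (yₙ) of positive reals with yₙ → +∞ and G(yₙ)/yₙ → 0, then for every α ≥ 0 and every β > 0 there exists y > 0 with G(α + βy) = y. -/
/-!
With `F y = G (α + β y)`, monotonicity and small `z` with `G z > z / β` give `a = z / β > 0`
with `a < F a`, while a large `yₙ` with `G yₙ / yₙ < 1 / (2β)` gives `b = (yₙ - α) / β > a`
with `F b < b`. The intermediate value theorem yields a fixed point of `F` in `[a, b]`.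
-/

open Filter Set Topology

theorem exists_pos_lt_comp_affine {G : ℝ → ℝ} (hG_mono : MonotoneOn G (Ici 0))
    (hG_unb : ∀ M > (0:ℝ), ∃ y > 0, M * y < G y) {α β : ℝ} (hα : 0 ≤ α) (hβ : 0 < β) :
    ∃ a > 0, a < G (α + β * a) := by
  obtain ⟨z, hz, hGz⟩ := hG_unb β⁻¹ (inv_pos.mpr hβ)
  refine ⟨β⁻¹ * z, by positivity, hGz.trans_le ?_⟩
  rw [mul_inv_cancel_left₀ hβ.ne']
  exact hG_mono (mem_Ici.mpr hz.le) (mem_Ici.mpr (by positivity)) (le_add_of_nonneg_left hα)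

theorem exists_gt_comp_affine_lt {G : ℝ → ℝ} {u : ℕ → ℝ} (hu : Tendsto u atTop atTop)
    (hratio : Tendsto (fun n => G (u n) / u n) atTop (𝓝 0)) (α : ℝ) {β : ℝ} (hβ : 0 < β)
    (c : ℝ) : ∃ b > c, G (α + β * b) < b := by
  obtain ⟨n, hn_ratio, hn_large⟩ :=
    ((hratio.eventually_lt_const (by positivity : (0:ℝ) < (2 * β)⁻¹)).and
      (hu.eventually_gt_atTop (max (max 0 (2 * α)) (α + β * c)))).exists
  simp only [max_lt_iff] at hn_large
  obtain ⟨⟨hu_pos, hu_two⟩, hu_c⟩ := hn_large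
  have hGu : G (u n) < u n / (2 * β) := by
    rwa [div_lt_iff₀ hu_pos, ← div_eq_inv_mul] at hn_ratio
  refine ⟨(u n - α) / β, by rw [gt_iff_lt, lt_div_iff₀ hβ]; linarith, ?_⟩
  rw [mul_div_cancel₀ _ hβ.ne', add_sub_cancel]
  calc G (u n) < u n / (2 * β) := hGu
    _ ≤ (u n - α) / β := by
      rw [div_le_div_iff₀ (by positivity) hβ]
      nlinarith

theorem lemma3_existence_general (G : ℝ → ℝ)
    (hG_cont : ContinuousOn G (Set.Ici 0))
    (hG_mono : StrictMonoOn G (Set.Ici 0))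
    (hG_unb0 : ∀ δ > (0:ℝ), ∀ M > (0:ℝ), ∃ y : ℝ, 0 < y ∧ y < δ ∧ G y > M * y)
    (yseq : ℕ → ℝ)
    (hseq_div : Filter.Tendsto yseq Filter.atTop Filter.atTop)
    (hseq_ratio : Filter.Tendsto (fun n => G (yseq n) / yseq n) Filter.atTop (nhds 0)) :
    ∀ α ≥ (0:ℝ), ∀ β > (0:ℝ), ∃ y > (0:ℝ), G (α + β * y) = y := by
  intro α hα β hβ
  have hG_unb : ∀ M > (0:ℝ), ∃ y > 0, M * y < G y := fun M hM => by
    obtain ⟨y, hy, -, hGy⟩ := hG_unb0 1 one_pos M hM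
    exact ⟨y, hy, hGy⟩
  obtain ⟨a, ha, haF⟩ := exists_pos_lt_comp_affine hG_mono.monotoneOn hG_unb hα hβ
  obtain ⟨b, hab, hbF⟩ := exists_gt_comp_affine_lt hseq_div hseq_ratio α hβ a
  have hF_cont : ContinuousOn (fun y => G (α + β * y)) (Icc a b) :=
    hG_cont.comp (by fun_prop) fun y hy =>
      mem_Ici.mpr (add_nonneg hα (mul_nonneg hβ.le (ha.le.trans hy.1)))
  obtain ⟨y, hy, hFy⟩ := exists_mem_Icc_isFixedPt hF_cont hab.le haF.le hbF.le
  exact ⟨y, ha.trans_le hy.1, hFy⟩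

/-- Lemma 3, existence part: if `G` satisfies the general conditions on the nonlinearity,
`G y / y` is unbounded near zero, and there is a sequence of positive reals `yₙ → +∞` with
`G yₙ / yₙ → 0`, then for every `α ≥ 0` and every `β > 0`, the map `y ↦ G (α + β * y)` has a
nonzero fixed point. -/
theorem lemma3_existence (G : ℝ → ℝ)
    (hG_cont : ContinuousOn G (Set.Ici 0))
    (hG_mono : StrictMonoOn G (Set.Ici 0))
    (hG_nonneg : ∀ y ≥ (0:ℝ), 0 ≤ G y)
    (hG0 : G 0 = 0)
    (hG_unb0 : ∀ δ > (0:ℝ), ∀ M > (0:ℝ), ∃ y : ℝ, 0 < y ∧ y < δ ∧ G y > M * y)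
    (yseq : ℕ → ℝ)
    (hseq_pos : ∀ n, 0 < yseq n)
    (hseq_div : Filter.Tendsto yseq Filter.atTop Filter.atTop)
    (hseq_ratio : Filter.Tendsto (fun n => G (yseq n) / yseq n) Filter.atTop (nhds 0)) :
    ∀ α ≥ (0:ℝ), ∀ β > (0:ℝ), ∃ y > (0:ℝ), G (α + β * y) = y :=
  lemma3_existence_general G hG_cont hG_mono hG_unb0 yseq hseq_div hseq_ratio
end

section
/- Let G satisfy the general conditions on the nonlinearity and let α > 0. Then there exists β₀ > 0 such that for every β ∈ (0, β₀] the set S_β = {y > 0 : G(α + βy) = y} is nonempty and has a minimum m(β); moreover m(β) → G(α) as β → 0⁺ (that is, for every ε > 0 there exists β₁ ∈ (0, β₀] such that |m(β) − G(α)| < ε for all β ∈ (0, β₁]). -/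
/-!
Every positive fixed point of `y ↦ G (α + β * y)` is at least `G α`, by monotonicity. For
`β * G (α + 1) ≤ 1` the map sends `G α` upwards and `G (α + 1)` downwards, so by the intermediate
value theorem it has fixed points in `[G α, G (α + 1)]`; they form a compact set, whose least
element is the least positive fixed point `m(β)`. Thus `G α ≤ m(β) = G (α + β * m(β))` with
`β * m(β) ≤ β * G (α + 1) → 0`, and continuity of `G` at `α` gives `m(β) → G α`.
-/

open Set Function

theorem exists_isLeast_Icc_inter_fixedPoints {X : Type*} [ConditionallyCompleteLinearOrder X]
    [TopologicalSpace X] [OrderTopology X] [DenselyOrdered X] {f : X → X} {a b : X}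
    (hf : ContinuousOn f (Icc a b)) (hab : a ≤ b) (ha : a ≤ f a) (hb : f b ≤ b) :
    ∃ m, IsLeast (Icc a b ∩ fixedPoints f) m := by
  have hclosed : IsClosed (Icc a b ∩ fixedPoints f) :=
    (hf.prodMk continuousOn_id).preimage_isClosed_of_isClosed isClosed_Icc isClosed_diagonal
  obtain ⟨c, hc, hfc⟩ := exists_mem_Icc_isFixedPt hf hab ha hb
  exact (isCompact_Icc.of_isClosed_subset hclosed inter_subset_left).exists_isLeast ⟨c, hc, hfc⟩

/-- The set `S_β` of nonzero fixed points of `y ↦ G (α + β * y)`. -/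
def positiveFixedPoints (G : ℝ → ℝ) (α β : ℝ) : Set ℝ :=
  {y | 0 < y ∧ G (α + β * y) = y}

section

variable {G : ℝ → ℝ} {α β : ℝ}

theorem le_of_mem_positiveFixedPoints (hG_mono : MonotoneOn G (Ici 0)) (hα : 0 ≤ α)
    (hβ : 0 ≤ β) {y : ℝ} (hy : y ∈ positiveFixedPoints G α β) : G α ≤ y :=
  hy.2 ▸ hG_mono hα (by simp only [mem_Ici]; nlinarith [hy.1]) (by nlinarith [hy.1])

theorem exists_isLeast_positiveFixedPoints (hG_cont : ContinuousOn G (Ici 0))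
    (hG_mono : StrictMonoOn G (Ici 0)) (hG0 : G 0 = 0) (hα : 0 < α) (hβ : 0 ≤ β)
    (hβM : β * G (α + 1) ≤ 1) :
    ∃ m, IsLeast (positiveFixedPoints G α β) m ∧ m ≤ G (α + 1) := by
  set F : ℝ → ℝ := fun y => G (α + β * y)
  have hGα : 0 < G α := hG0 ▸ hG_mono self_mem_Ici hα.le hα
  have hGM : G α < G (α + 1) := hG_mono hα.le (by simp only [mem_Ici]; linarith) (by linarith)
  have hF_cont : ContinuousOn F (Icc (G α) (G (α + 1))) :=
    hG_cont.comp (by fun_prop) fun y hy => by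
      simp only [mem_Ici]; nlinarith [hy.1]
  have hF_left : G α ≤ F (G α) :=
    hG_mono.monotoneOn hα.le (by simp only [mem_Ici]; nlinarith) (by nlinarith)
  have hF_right : F (G (α + 1)) ≤ G (α + 1) :=
    hG_mono.monotoneOn (by simp only [mem_Ici]; nlinarith) (by simp only [mem_Ici]; linarith)
      (by linarith)
  obtain ⟨m, ⟨hm_mem, hm_fix⟩, hm_least⟩ :=
    exists_isLeast_Icc_inter_fixedPoints hF_cont hGM.le hF_left hF_right
  refine ⟨m, ⟨⟨hGα.trans_le hm_mem.1, hm_fix⟩, fun y hy => ?_⟩, hm_mem.2⟩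
  rcases le_or_gt y (G (α + 1)) with hyM | hyM
  · exact hm_least ⟨⟨le_of_mem_positiveFixedPoints hG_mono.monotoneOn hα.le hβ hy, hyM⟩, hy.2⟩
  · exact hm_mem.2.trans hyM.le

theorem exists_forall_mem_positiveFixedPoints_abs_sub_lt (hG : ContinuousAt G α) (M : ℝ)
    {ε : ℝ} (hε : 0 < ε) :
    ∃ δ > 0, ∀ β, 0 ≤ β → β ≤ δ → ∀ y ∈ positiveFixedPoints G α β, y ≤ M → |y - G α| < ε := by
  obtain ⟨η, hη, hGη⟩ := Metric.continuousAt_iff.mp hG ε hε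
  refine ⟨η / (|M| + 1), by positivity, fun β hβ hβδ y hy hyM => ?_⟩
  have hβy : β * y < η :=
    calc β * y ≤ η / (|M| + 1) * |M| := mul_le_mul hβδ (hyM.trans (le_abs_self M)) hy.1.le
          (by positivity)
      _ < η := by rw [div_mul_eq_mul_div, div_lt_iff₀ (by positivity)]; nlinarith
  have hdist : dist (α + β * y) α < η := by
    rw [Real.dist_eq, add_sub_cancel_left, abs_of_nonneg (mul_nonneg hβ hy.1.le)]
    exact hβy
  simpa only [Real.dist_eq, hy.2] using hGη hdist

end

theorem lemma_min_fixed_points_converges_general (G : ℝ → ℝ)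
    (hG_cont : ContinuousOn G (Set.Ici 0))
    (hG_mono : StrictMonoOn G (Set.Ici 0))
    (hG0 : G 0 = 0)
    (α : ℝ) (hα : 0 < α) :
    ∃ β₀ > (0:ℝ),
      (∀ β : ℝ, 0 < β → β ≤ β₀ →
        ∃ m : ℝ, IsLeast {y : ℝ | 0 < y ∧ G (α + β * y) = y} m) ∧
      (∀ ε > (0:ℝ), ∃ β₁ : ℝ, 0 < β₁ ∧ β₁ ≤ β₀ ∧ ∀ β : ℝ, 0 < β → β ≤ β₁ →
        ∀ m : ℝ, IsLeast {y : ℝ | 0 < y ∧ G (α + β * y) = y} m → |m - G α| < ε) := by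
  set M := G (α + 1)
  have hM : 0 < M := hG0 ▸ hG_mono self_mem_Ici (by simp only [mem_Ici]; linarith) (by linarith)
  have hleast : ∀ β, 0 < β → β ≤ 1 / M →
      ∃ m, IsLeast (positiveFixedPoints G α β) m ∧ m ≤ M := fun β hβ hβ₀ =>
    exists_isLeast_positiveFixedPoints hG_cont hG_mono hG0 hα hβ.le
      ((le_div_iff₀ hM).mp hβ₀)
  refine ⟨1 / M, by positivity, fun β hβ hβ₀ => (hleast β hβ hβ₀).imp fun _ => And.left, ?_⟩
  intro ε hε
  obtain ⟨δ, hδ, hclose⟩ := exists_forall_mem_positiveFixedPoints_abs_sub_lt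
    (hG_cont.continuousAt (Ici_mem_nhds hα)) M hε
  refine ⟨min (1 / M) δ, by positivity, min_le_left _ _, fun β hβ hβ₁ m hm => ?_⟩
  obtain ⟨m', hm', hm'M⟩ := hleast β hβ (hβ₁.trans (min_le_left _ _))
  exact hclose β hβ.le (hβ₁.trans (min_le_right _ _)) m hm.1 (hm.unique hm' ▸ hm'M)

/-- Lemma 29, first part: for `G` satisfying the general conditions on the nonlinearity and
`α > 0`, the minimum of the nonzero fixed points of `y ↦ G (α + β * y)` exists for small
enough `β > 0` and converges to `G α` as `β → 0⁺`. -/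
theorem lemma_min_fixed_points_converges (G : ℝ → ℝ)
    (hG_cont : ContinuousOn G (Set.Ici 0))
    (hG_mono : StrictMonoOn G (Set.Ici 0))
    (hG_nonneg : ∀ y ≥ (0:ℝ), 0 ≤ G y)
    (hG0 : G 0 = 0)
    (α : ℝ) (hα : 0 < α) :
    ∃ β₀ > (0:ℝ),
      (∀ β : ℝ, 0 < β → β ≤ β₀ →
        ∃ m : ℝ, IsLeast {y : ℝ | 0 < y ∧ G (α + β * y) = y} m) ∧
      (∀ ε > (0:ℝ), ∃ β₁ : ℝ, 0 < β₁ ∧ β₁ ≤ β₀ ∧ ∀ β : ℝ, 0 < β → β ≤ β₁ →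
        ∀ m : ℝ, IsLeast {y : ℝ | 0 < y ∧ G (α + β * y) = y} m → |m - G α| < ε) :=
  lemma_min_fixed_points_converges_general G hG_cont hG_mono hG0 α hα
end

section
/- Let G satisfy the general conditions on the nonlinearity, let α > 0, and suppose there exists ε > 0 such that y ↦ G(α + y)/y is strictly decreasing on (0, ε). Let β₀ > 0 be such that for every β ∈ (0, β₀] the set S_β = {y > 0 : G(α + βy) = y} is nonempty and has a minimum m(β). Then the nonzero fixed points other than the minimum diverge to +∞ as β → 0⁺: for every M > 0 there exists β₁ ∈ (0, β₀] such that for every β ∈ (0, β₁], every y ∈ S_β with y ≠ m(β) satisfies y > M. -/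
/-!
Writing `t = β * y`, the fixed-point equation `G (α + β * y) = y` reads `G (α + t) / t = β⁻¹`.
Two fixed points `m < y` therefore give two points `β * m < β * y` at which the ratio
`t ↦ G (α + t) / t` takes the same value, which is impossible while both lie in `(0, ε)`, where
the ratio is strictly decreasing. Hence every fixed point other than the minimum satisfies
`ε ≤ β * y`, i.e. `y ≥ ε / β`, which tends to `+∞` as `β → 0⁺`.
-/

lemma le_mul_of_fixedPoints_of_strictAntiOn_div {g : ℝ → ℝ} {ε β m y : ℝ}
    (hg : StrictAntiOn (fun t => g t / t) (Set.Ioo 0 ε)) (hβ : 0 < β) (hm : 0 < m)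
    (hmy : m < y) (hm_fix : g (β * m) = m) (hy_fix : g (β * y) = y) : ε ≤ β * y := by
  by_contra! hlt
  have hratio : ∀ x, 0 < x → g (β * x) = x → g (β * x) / (β * x) = β⁻¹ := by
    intro x hx hfix
    rw [hfix]
    field_simp
  have hβmy : β * m < β * y := mul_lt_mul_of_pos_left hmy hβ
  have hdec := hg ⟨by positivity, hβmy.trans hlt⟩ ⟨mul_pos hβ (hm.trans hmy), hlt⟩ hβmy
  simp only [hratio m hm hm_fix, hratio y (hm.trans hmy) hy_fix] at hdec
  exact lt_irrefl _ hdec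

theorem lemma_other_fixed_points_diverge_general (G : ℝ → ℝ)
    (α : ℝ)
    (ε : ℝ) (hε : 0 < ε)
    (hG_dec : ∀ y₁ y₂ : ℝ, 0 < y₁ → y₁ < y₂ → y₂ < ε →
      G (α + y₂) / y₂ < G (α + y₁) / y₁)
    (β₀ : ℝ) (hβ₀ : 0 < β₀) :
    ∀ M > (0:ℝ), ∃ β₁ : ℝ, 0 < β₁ ∧ β₁ ≤ β₀ ∧ ∀ β : ℝ, 0 < β → β ≤ β₁ →
      ∀ m y : ℝ, IsLeast {y : ℝ | 0 < y ∧ G (α + β * y) = y} m →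
        (0 < y ∧ G (α + β * y) = y) → y ≠ m → M < y := by
  intro M hM
  refine ⟨min β₀ (ε / (2 * M)), lt_min hβ₀ (by positivity), min_le_left _ _, ?_⟩
  intro β hβ hβ₁ m y ⟨⟨hm_pos, hm_fix⟩, hm_least⟩ hy hne
  have hmy : m < y := (hm_least hy).lt_of_ne (Ne.symm hne)
  have hanti : StrictAntiOn (fun t => G (α + t) / t) (Set.Ioo 0 ε) :=
    fun a ha b hb hab => hG_dec a b ha.1 hab hb.2
  have hεy : ε ≤ β * y :=
    le_mul_of_fixedPoints_of_strictAntiOn_div (g := fun t => G (α + t)) hanti hβ hm_pos hmy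
      hm_fix hy.2
  have hβM : β * (2 * M) ≤ ε :=
    (le_div_iff₀ (by positivity)).mp (hβ₁.trans (min_le_right _ _))
  have h2M : 2 * M ≤ y := le_of_mul_le_mul_left (hβM.trans hεy) hβ
  linarith

/-- Lemma 29, second part: for `G` satisfying the general conditions on the nonlinearity,
`α > 0`, and `y ↦ G (α + y) / y` strictly decreasing near zero, the nonzero fixed points of
`y ↦ G (α + β * y)` other than the minimum diverge to `+∞` as `β → 0⁺`. -/
theorem lemma_other_fixed_points_diverge (G : ℝ → ℝ)
    (hG_cont : ContinuousOn G (Set.Ici 0))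
    (hG_mono : StrictMonoOn G (Set.Ici 0))
    (hG_nonneg : ∀ y ≥ (0:ℝ), 0 ≤ G y)
    (hG0 : G 0 = 0)
    (α : ℝ) (hα : 0 < α)
    (ε : ℝ) (hε : 0 < ε)
    (hG_dec : ∀ y₁ y₂ : ℝ, 0 < y₁ → y₁ < y₂ → y₂ < ε →
      G (α + y₂) / y₂ < G (α + y₁) / y₁)
    (β₀ : ℝ) (hβ₀ : 0 < β₀)
    (hmin : ∀ β : ℝ, 0 < β → β ≤ β₀ →
      ∃ m : ℝ, IsLeast {y : ℝ | 0 < y ∧ G (α + β * y) = y} m) :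
    ∀ M > (0:ℝ), ∃ β₁ : ℝ, 0 < β₁ ∧ β₁ ≤ β₀ ∧ ∀ β : ℝ, 0 < β → β ≤ β₁ →
      ∀ m y : ℝ, IsLeast {y : ℝ | 0 < y ∧ G (α + β * y) = y} m →
        (0 < y ∧ G (α + β * y) = y) → y ≠ m → M < y :=
  lemma_other_fixed_points_diverge_general G α ε hε hG_dec β₀ hβ₀
end

section
/- Let G satisfy the general conditions on the nonlinearity, suppose G(y)/y is unbounded on (0,∞), and let β₀ > 0 be such that for every β ∈ (0, β₀] the set {y > 0 : G(βy) = y} is nonempty with minimum m(β). Then the following are equivalent: (1) m(β) does not diverge to +∞ as β → 0⁺, i.e. there exists M > 0 such that for every ε > 0 there exists β ∈ (0, min(ε, β₀)] with m(β) ≤ M; (2) G(y)/y is unbounded near zero. -/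
/-!
If `G (β x) = x` with `x > 0`, then `y = β x` satisfies `G y / y = 1 / β`. Hence fixed points
`m β ≤ M` for arbitrarily small `β` give points `y ≤ β M` arbitrarily close to `0` at which
`G y / y` is arbitrarily large. Conversely, if `G z > z / β` for some `z < β`, the map
`y ↦ G (β y)` lies above the diagonal at `z / β` and, once `β` is so small that `G β < 1`
(continuity at `0`), below it at `1`; the intermediate value theorem gives a fixed point in
`(0, 1]`, so `m β ≤ 1`.
-/

open Set Filter Topology

theorem exists_apply_mul_eq_mem_Ioc {G : ℝ → ℝ} {β z : ℝ} (hG : ContinuousOn G (Ici 0))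
    (hβ : 0 < β) (hGβ : G β < 1) (hz : 0 < z) (hzβ : z < β) (hGz : G z > β⁻¹ * z) :
    ∃ c ∈ Ioc 0 1, G (β * c) = c := by
  have hcont : ContinuousOn (fun y => G (β * y)) (Icc (z / β) 1) :=
    hG.comp (continuousOn_const.mul continuousOn_id) fun y hy =>
      mul_nonneg hβ.le ((div_pos hz hβ).le.trans hy.1)
  have hlow : z / β ≤ G (β * (z / β)) := by
    rw [mul_div_cancel₀ z hβ.ne', div_eq_inv_mul]
    exact hGz.le
  obtain ⟨c, hc, hfix⟩ := exists_mem_Icc_isFixedPt hcont ((div_le_one hβ).2 hzβ.le) hlow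
    (by simpa using hGβ.le)
  exact ⟨c, ⟨(div_pos hz hβ).trans_le hc.1, hc.2⟩, hfix⟩

theorem lemma_min_nondivergence_iff_general (G : ℝ → ℝ)
    (hG_cont : ContinuousOn G (Set.Ici 0))
    (hG0 : G 0 = 0)
    (β₀ : ℝ) (hβ₀ : 0 < β₀) (m : ℝ → ℝ)
    (hm : ∀ β : ℝ, 0 < β → β ≤ β₀ →
      IsLeast {y : ℝ | 0 < y ∧ G (β * y) = y} (m β)) :
    (∃ M > (0:ℝ), ∀ ε > (0:ℝ), ∃ β : ℝ, 0 < β ∧ β ≤ min ε β₀ ∧ m β ≤ M) ↔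
      (∀ δ > (0:ℝ), ∀ M > (0:ℝ), ∃ y : ℝ, 0 < y ∧ y < δ ∧ G y > M * y) := by
  constructor
  · rintro ⟨M, hM, hbdd⟩ δ hδ K hK
    obtain ⟨β, hβ, hβle, hmβ⟩ := hbdd (min (δ / (2 * M)) (1 / (2 * K))) (by positivity)
    obtain ⟨⟨hmpos, hfix⟩, -⟩ := hm β hβ (hβle.trans (min_le_right _ _))
    have hβε := hβle.trans (min_le_left _ _)
    have hβδ : β * (2 * M) ≤ δ := (le_div_iff₀ (by positivity)).1 (hβε.trans (min_le_left _ _))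
    have hβK : β * (2 * K) ≤ 1 := (le_div_iff₀ (by positivity)).1 (hβε.trans (min_le_right _ _))
    refine ⟨β * m β, by positivity, by nlinarith, ?_⟩
    rw [hfix]
    nlinarith
  · intro H
    refine ⟨1, one_pos, fun ε hε => ?_⟩
    have hGsmall : ∀ᶠ β in 𝓝[>] 0, G β < 1 :=
      (((hG_cont 0 self_mem_Ici).mono Ioi_subset_Ici_self).tendsto).eventually_lt_const
        (by rw [hG0]; exact one_pos)
    obtain ⟨β, hGβ, hβ, hβle⟩ := (hGsmall.and (Ioc_mem_nhdsGT (lt_min hε hβ₀))).exists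
    obtain ⟨z, hz, hzβ, hGz⟩ := H β hβ β⁻¹ (inv_pos.2 hβ)
    obtain ⟨c, ⟨hc, hc1⟩, hfix⟩ := exists_apply_mul_eq_mem_Ioc hG_cont hβ hGβ hz hzβ hGz
    exact ⟨β, hβ, hβle, ((hm β hβ (hβle.trans (min_le_right _ _))).2 ⟨hc, hfix⟩).trans hc1⟩

/-- Characterization part of the lemma used for nondivergent existence: with `G` satisfying the
general conditions on the nonlinearity, `G y / y` unbounded on `(0, ∞)`, and `m β` the minimum
of the nonzero fixed points of `y ↦ G (β * y)` for `0 < β ≤ β₀`, the minimum `m β` does not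
diverge to `+∞` as `β → 0⁺` if and only if `G y / y` is unbounded near zero. -/
theorem lemma_min_nondivergence_iff (G : ℝ → ℝ)
    (hG_cont : ContinuousOn G (Set.Ici 0))
    (hG_mono : StrictMonoOn G (Set.Ici 0))
    (hG_nonneg : ∀ y ≥ (0:ℝ), 0 ≤ G y)
    (hG0 : G 0 = 0)
    (hG_unb : ∀ M > (0:ℝ), ∃ y > (0:ℝ), G y > M * y)
    (β₀ : ℝ) (hβ₀ : 0 < β₀) (m : ℝ → ℝ)
    (hm : ∀ β : ℝ, 0 < β → β ≤ β₀ →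
      IsLeast {y : ℝ | 0 < y ∧ G (β * y) = y} (m β)) :
    (∃ M > (0:ℝ), ∀ ε > (0:ℝ), ∃ β : ℝ, 0 < β ∧ β ≤ min ε β₀ ∧ m β ≤ M) ↔
      (∀ δ > (0:ℝ), ∀ M > (0:ℝ), ∃ y : ℝ, 0 < y ∧ y < δ ∧ G y > M * y) :=
  lemma_min_nondivergence_iff_general G hG_cont hG0 β₀ hβ₀ m hm
end

section
/- Let K satisfy the general conditions on the kernel and suppose K(t,s) ≤ K(t',s) for all 0 ≤ s ≤ t < t'. Let G satisfy the general conditions on the nonlinearity with G(y)/y unbounded on (0,∞). Fix c₁ ∈ (0,1], an integer n ≥ 0, reals 0 = t₀ < t₁ < ... < t_n, and strictly positive reals Z₀, ..., Z_{n−1} (no condition when n = 0). Then there exists H_n > 0 such that for every h_n ∈ (0, H_n] there exists Z_n > 0 satisfying Z_n = G( Σ_{l=0}^{n−1} Z_l ∫_{t_l}^{t_{l+1}} K(t_n + c₁h_n, s) ds + Z_n ∫_{t_n}^{t_n + c₁h_n} K(t_n + c₁h_n, s) ds ). (This is the inductive step establishing existence near zero of nontrivial collocation solutions in case 1, m = 1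 with c₁ > 0.) -/
/-!
Write `A` for the history sum and `B = ∫_{t_n}^{t_n + c₁ h} K(t_n + c₁ h, s) ds`, so that the
equation asks for a positive fixed point of `x ↦ G (A + x B)`. Since `K` is bounded near the
mesh, `A` stays below a bound `A'` independent of `h` while `B = O(h)`; hence for small `h`
the point `b = max (G (A' + 1)) 1` satisfies `G (A + b B) ≤ b`. A point `a > 0` with
`a ≤ G (A + a B)` exists as well: if `n ≥ 1` then `A > 0` (the first history integral dominates
`∫₀^{t₁} K(t₁, s) ds > 0`) and `a = G A` works; if `n = 0` then `B > 0` and `a` comes from the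
unboundedness of `G y / y`. The intermediate value theorem gives a fixed point between `a`
and `b`.
-/

open Set Finset

lemma exists_pos_isFixedPt {f : ℝ → ℝ} {a b : ℝ} (hf : ContinuousOn f (uIcc a b))
    (ha : 0 < a) (hb : 0 < b) (hfa : a ≤ f a) (hfb : f b ≤ b) : ∃ x > 0, x = f x := by
  obtain ⟨x, hx, hfx⟩ := exists_mem_uIcc_isFixedPt hf hfa hfb
  exact ⟨x, (lt_min ha hb).trans_le hx.1, hfx.symm⟩

lemma integral_le_mul_sub_of_le {f : ℝ → ℝ} {a b C : ℝ} (hab : a ≤ b)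
    (hf0 : ∀ s ∈ Ioc a b, 0 ≤ f s) (hfC : ∀ s ∈ Ioc a b, f s ≤ C) :
    ∫ s in a..b, f s ≤ C * (b - a) := by
  have h := intervalIntegral.norm_integral_le_of_norm_le_const (f := f) (C := C) fun s hs => by
    rw [uIoc_of_le hab] at hs
    rw [Real.norm_of_nonneg (hf0 s hs)]
    exact hfC s hs
  rw [abs_of_nonneg (sub_nonneg.mpr hab)] at h
  exact (le_abs_self _).trans h

section Nonlinearity

variable {G : ℝ → ℝ} {A B : ℝ}

lemma exists_pos_le_of_unbounded (hG_mono : MonotoneOn G (Ici 0))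
    (hG_unb : ∀ M > (0:ℝ), ∃ y > (0:ℝ), G y > M * y) (hA : 0 ≤ A) (hB : 0 < B) :
    ∃ a > 0, a ≤ G (A + a * B) := by
  obtain ⟨y, hy, hGy⟩ := hG_unb B⁻¹ (inv_pos.mpr hB)
  refine ⟨y / B, div_pos hy hB, ?_⟩
  rw [div_mul_cancel₀ y hB.ne']
  calc y / B = B⁻¹ * y := by ring
    _ ≤ G y := hGy.le
    _ ≤ G (A + y) := hG_mono hy.le (Set.mem_Ici.mpr (by linarith)) (by linarith)

lemma exists_pos_le_of_pos (hG_mono : StrictMonoOn G (Ici 0)) (hG0 : G 0 = 0)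
    (hA : 0 < A) (hB : 0 ≤ B) : ∃ a > 0, a ≤ G (A + a * B) := by
  have hGA : 0 < G A := hG0 ▸ hG_mono self_mem_Ici hA.le hA
  refine ⟨G A, hGA, hG_mono.monotoneOn hA.le ?_ ?_⟩
  · exact add_nonneg hA.le (mul_nonneg hGA.le hB)
  · exact le_add_of_nonneg_right (mul_nonneg hGA.le hB)

theorem exists_pos_eq_apply_add_mul (hG_cont : ContinuousOn G (Ici 0))
    (hG_mono : StrictMonoOn G (Ici 0)) (hG0 : G 0 = 0)
    (hG_unb : ∀ M > (0:ℝ), ∃ y > (0:ℝ), G y > M * y)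
    {A' b : ℝ} (hA : 0 ≤ A) (hAA' : A ≤ A') (hB : 0 ≤ B) (hAB : 0 < A ∨ 0 < B)
    (hb : 0 < b) (hGb : G (A' + 1) ≤ b) (hbB : b * B ≤ 1) :
    ∃ x > 0, x = G (A + x * B) := by
  have hcont : ContinuousOn (fun x => G (A + x * B)) (Ici 0) :=
    hG_cont.comp (by fun_prop) fun x hx => add_nonneg hA (mul_nonneg hx hB)
  have hsuper : G (A + b * B) ≤ b :=
    (hG_mono.monotoneOn (add_nonneg hA (mul_nonneg hb.le hB)) (Set.mem_Ici.mpr (by linarith))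
      (by linarith)).trans hGb
  obtain ⟨a, ha, hsub⟩ := hAB.elim (exists_pos_le_of_pos hG_mono hG0 · hB)
    (exists_pos_le_of_unbounded hG_mono.monotoneOn hG_unb hA)
  exact exists_pos_isFixedPt (hcont.mono fun x hx => (lt_min ha hb).le.trans hx.1) ha hb
    hsub hsuper

end Nonlinearity

section Kernel

variable {K : ℝ → ℝ → ℝ}

lemma integral_kernel_pos (hK_inc : StrictMonoOn (fun t => ∫ s in (0:ℝ)..t, K t s) (Ici 0))
    {τ : ℝ} (hτ : 0 < τ) : 0 < ∫ s in (0:ℝ)..τ, K τ s := by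
  simpa using hK_inc self_mem_Ici hτ.le hτ

lemma history_term_nonneg (hK_nonneg : ∀ t s : ℝ, 0 ≤ K t s) {n : ℕ} {t Z : ℕ → ℝ} (T : ℝ)
    (ht_mono : ∀ l < n, t l < t (l + 1)) (hZ : ∀ l < n, 0 < Z l) :
    ∀ l ∈ range n, 0 ≤ Z l * ∫ s in (t l)..(t (l + 1)), K T s := fun l hl =>
  mul_nonneg (hZ l (mem_range.mp hl)).le <|
    intervalIntegral.integral_nonneg (ht_mono l (mem_range.mp hl)).le fun s _ => hK_nonneg T s

lemma history_pos (hK_nonneg : ∀ t s : ℝ, 0 ≤ K t s)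
    (hK_int : ∀ t > (0:ℝ), IntervalIntegrable (fun s => K t s) MeasureTheory.volume 0 t)
    (hK_inc : StrictMonoOn (fun t => ∫ s in (0:ℝ)..t, K t s) (Ici 0))
    (hK_mono : ∀ t t' s : ℝ, 0 ≤ s → s ≤ t → t < t' → K t s ≤ K t' s)
    {n : ℕ} {t Z : ℕ → ℝ} {T : ℝ} (hn : 0 < n) (ht0 : t 0 = 0)
    (ht_mono : ∀ l < n, t l < t (l + 1)) (htnT : t n < T) (hZ : ∀ l < n, 0 < Z l) :
    0 < ∑ l ∈ range n, Z l * ∫ s in (t l)..(t (l + 1)), K T s := by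
  have ht1 : 0 < t 1 := ht0 ▸ ht_mono 0 hn
  have ht1T : t 1 < T := lt_of_le_of_lt
    ((strictMonoOn_Iic_of_lt_succ ht_mono).monotoneOn (mem_Iic.mpr hn) self_mem_Iic hn) htnT
  have hT : 0 < T := ht1.trans ht1T
  have hfirst : 0 < ∫ s in (t 0)..(t 1), K T s := by
    rw [ht0]
    refine (integral_kernel_pos hK_inc ht1).trans_le ?_
    refine intervalIntegral.integral_mono_on ht1.le (hK_int _ ht1)
      ((hK_int T hT).mono_set ?_) fun s hs => hK_mono _ _ s hs.1 hs.2 ht1T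
    rw [uIcc_of_le ht1.le, uIcc_of_le hT.le]
    exact Icc_subset_Icc_right ht1T.le
  exact (mul_pos (hZ 0 hn) hfirst).trans_le <|
    single_le_sum (history_term_nonneg hK_nonneg T ht_mono hZ) (mem_range.mpr hn)

lemma history_le (hK_nonneg : ∀ t s : ℝ, 0 ≤ K t s) {n : ℕ} {t Z : ℕ → ℝ} {T C : ℝ}
    (ht0 : t 0 = 0) (ht_mono : ∀ l < n, t l < t (l + 1)) (htnT : t n ≤ T)
    (hZ : ∀ l < n, 0 < Z l) (hKC : ∀ s ∈ Icc 0 T, K T s ≤ C) :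
    ∑ l ∈ range n, Z l * ∫ s in (t l)..(t (l + 1)), K T s ≤
      ∑ l ∈ range n, Z l * (C * (t (l + 1) - t l)) := by
  have hmesh := (strictMonoOn_Iic_of_lt_succ ht_mono).monotoneOn
  refine sum_le_sum fun l hl => ?_
  have hl : l < n := mem_range.mp hl
  have htl : 0 ≤ t l := ht0 ▸ hmesh (mem_Iic.mpr n.zero_le) (mem_Iic.mpr hl.le) l.zero_le
  have htlT : t (l + 1) ≤ T := (hmesh (mem_Iic.mpr hl) self_mem_Iic hl).trans htnT
  refine mul_le_mul_of_nonneg_left ?_ (hZ l hl).le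
  exact integral_le_mul_sub_of_le (ht_mono l hl).le (fun s _ => hK_nonneg T s)
    fun s hs => hKC s ⟨htl.trans hs.1.le, hs.2.trans htlT⟩

end Kernel

theorem prop1_sufficiency_general (K : ℝ → ℝ → ℝ)
    (hK_nonneg : ∀ t s : ℝ, 0 ≤ K t s)
    (hK_bdd : ∀ R > (0:ℝ), ∃ C : ℝ, ∀ t ∈ Set.Icc (-R) R, ∀ s ∈ Set.Icc (-R) R, K t s ≤ C)
    (hK_int : ∀ t > (0:ℝ), IntervalIntegrable (fun s => K t s) MeasureTheory.volume 0 t)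
    (hK_inc : StrictMonoOn (fun t => ∫ s in (0:ℝ)..t, K t s) (Set.Ici 0))
    (hK_mono : ∀ t t' s : ℝ, 0 ≤ s → s ≤ t → t < t' → K t s ≤ K t' s)
    (G : ℝ → ℝ)
    (hG_cont : ContinuousOn G (Set.Ici 0))
    (hG_mono : StrictMonoOn G (Set.Ici 0))
    (hG0 : G 0 = 0)
    (hG_unb : ∀ M > (0:ℝ), ∃ y > (0:ℝ), G y > M * y)
    (c₁ : ℝ) (hc₁ : 0 < c₁) (hc₁' : c₁ ≤ 1)
    (n : ℕ) (t : ℕ → ℝ) (ht0 : t 0 = 0) (ht_mono : ∀ l < n, t l < t (l + 1))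
    (Z : ℕ → ℝ) (hZ_pos : ∀ l < n, 0 < Z l) :
    ∃ Hn > (0:ℝ), ∀ hn : ℝ, 0 < hn → hn ≤ Hn → ∃ Zn > (0:ℝ),
      Zn = G ((∑ l ∈ Finset.range n,
          Z l * ∫ s in (t l)..(t (l + 1)), K (t n + c₁ * hn) s)
        + Zn * ∫ s in (t n)..(t n + c₁ * hn), K (t n + c₁ * hn) s) := by
  have htn : 0 ≤ t n := ht0 ▸ (strictMonoOn_Iic_of_lt_succ ht_mono).monotoneOn
    (mem_Iic.mpr n.zero_le) self_mem_Iic n.zero_le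
  obtain ⟨C, hC⟩ := hK_bdd (t n + 1) (by linarith)
  have hC0 : 0 ≤ C :=
    (hK_nonneg 0 0).trans (hC 0 ⟨by linarith, by linarith⟩ 0 ⟨by linarith, by linarith⟩)
  set b := max (G (∑ l ∈ range n, Z l * (C * (t (l + 1) - t l)) + 1)) 1
  have hb : 0 < b := zero_lt_one.trans_le (le_max_right _ _)
  refine ⟨min 1 (1 / ((C + 1) * b)), by positivity, fun h hh hhH => ?_⟩
  set T := t n + c₁ * h
  have hch0 : 0 < c₁ * h := mul_pos hc₁ hh
  have hch : c₁ * h ≤ 1 := mul_le_one₀ hc₁' hh.le (hhH.trans (min_le_left _ _))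
  have hKC : ∀ s ∈ Icc 0 T, K T s ≤ C := fun s hs =>
    hC T ⟨by linarith, by linarith⟩ s ⟨by linarith [hs.1], by linarith [hs.2]⟩
  have hB0 : 0 ≤ ∫ s in (t n)..T, K T s :=
    intervalIntegral.integral_nonneg (by linarith) fun s _ => hK_nonneg T s
  have hBC : ∫ s in (t n)..T, K T s ≤ C * (c₁ * h) := by
    simpa [T] using integral_le_mul_sub_of_le (by linarith) (fun s _ => hK_nonneg T s)
      fun s hs => hKC s ⟨htn.trans hs.1.le, hs.2⟩
  have hbB : b * ∫ s in (t n)..T, K T s ≤ 1 :=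
    calc b * ∫ s in (t n)..T, K T s ≤ b * ((C + 1) * h) := by gcongr; nlinarith
      _ ≤ b * ((C + 1) * (1 / ((C + 1) * b))) := by gcongr; exact hhH.trans (min_le_right _ _)
      _ = 1 := by field_simp
  refine exists_pos_eq_apply_add_mul hG_cont hG_mono hG0 hG_unb
    (sum_nonneg (history_term_nonneg hK_nonneg T ht_mono hZ_pos))
    (history_le hK_nonneg ht0 ht_mono (by linarith) hZ_pos hKC) hB0 ?_ hb (le_max_left _ _) hbB
  rcases n.eq_zero_or_pos with rfl | hn
  · exact Or.inr (ht0 ▸ integral_kernel_pos hK_inc (by linarith))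
  · exact Or.inl (history_pos hK_nonneg hK_int hK_inc hK_mono hn ht0 ht_mono (by linarith) hZ_pos)

/-- Proposition 1, sufficiency direction (inductive step), case 1 (`m = 1`, `c₁ > 0`):
with `K` satisfying the general conditions on the kernel and monotone in its first variable,
and `G` satisfying the general conditions on the nonlinearity with `G y / y` unbounded, given
a partial mesh `0 = t₀ < … < t_n` and strictly positive coefficients `Z₀, …, Z_{n-1}`, there
exists `H_n > 0` such that for every stepsize `0 < h_n ≤ H_n` the next collocation equation has
a strictly positive solution `Z_n`. -/
theorem prop1_sufficiency (K : ℝ → ℝ → ℝ)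
    (hK_nonneg : ∀ t s : ℝ, 0 ≤ K t s)
    (hK_bdd : ∀ R > (0:ℝ), ∃ C : ℝ, ∀ t ∈ Set.Icc (-R) R, ∀ s ∈ Set.Icc (-R) R, K t s ≤ C)
    (hK_supp : ∀ t s : ℝ, (s < 0 ∨ t < s) → K t s = 0)
    (hK_int : ∀ t > (0:ℝ), IntervalIntegrable (fun s => K t s) MeasureTheory.volume 0 t)
    (hK_inc : StrictMonoOn (fun t => ∫ s in (0:ℝ)..t, K t s) (Set.Ici 0))
    (hK_mono : ∀ t t' s : ℝ, 0 ≤ s → s ≤ t → t < t' → K t s ≤ K t' s)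
    (G : ℝ → ℝ)
    (hG_cont : ContinuousOn G (Set.Ici 0))
    (hG_mono : StrictMonoOn G (Set.Ici 0))
    (hG_nonneg : ∀ y ≥ (0:ℝ), 0 ≤ G y)
    (hG0 : G 0 = 0)
    (hG_unb : ∀ M > (0:ℝ), ∃ y > (0:ℝ), G y > M * y)
    (c₁ : ℝ) (hc₁ : 0 < c₁) (hc₁' : c₁ ≤ 1)
    (n : ℕ) (t : ℕ → ℝ) (ht0 : t 0 = 0) (ht_mono : ∀ l < n, t l < t (l + 1))
    (Z : ℕ → ℝ) (hZ_pos : ∀ l < n, 0 < Z l) :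
    ∃ Hn > (0:ℝ), ∀ hn : ℝ, 0 < hn → hn ≤ Hn → ∃ Zn > (0:ℝ),
      Zn = G ((∑ l ∈ Finset.range n,
          Z l * ∫ s in (t l)..(t (l + 1)), K (t n + c₁ * hn) s)
        + Zn * ∫ s in (t n)..(t n + c₁ * hn), K (t n + c₁ * hn) s) :=
  prop1_sufficiency_general K hK_nonneg hK_bdd hK_int hK_inc hK_mono G hG_cont hG_mono hG0 hG_unb c₁
    hc₁ hc₁' n t ht0 ht_mono Z hZ_pos
end

section
/- Let K satisfy the general conditions on the kernel, let G satisfy the general conditions on the nonlinearity, and fix c₁ ∈ (0,1]. Suppose that for every ε > 0 there exist h₀ ∈ (0, ε] and Z₀ > 0 satisfying the first collocation equation Z₀ = G( Z₀ ∫₀^{c₁h₀} K(c₁h₀, s) ds ). Then G(y)/y is unbounded on (0,∞). -/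
/-!
The mass `a(t) = ∫₀ᵗ K(t,s) ds` of the kernel is positive for `t > 0`, because it is strictly
increasing from `a(0) = 0`, and it is at most `C t` by local boundedness, so `a(t) → 0⁺`.
A positive solution of `Z₀ = G(Z₀ a(t))` at a small stepsize gives `y = Z₀ a(t) > 0` with
`G y = y / a(t)`, and `1 / a(t)` exceeds any prescribed `M`.
-/

open Set Filter Topology

noncomputable section

def kernelMass (K : ℝ → ℝ → ℝ) (t : ℝ) : ℝ := ∫ s in (0:ℝ)..t, K t s

section kernelMass

variable {K : ℝ → ℝ → ℝ}

@[simp]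
theorem kernelMass_zero : kernelMass K 0 = 0 := intervalIntegral.integral_same

theorem kernelMass_pos (hK_inc : StrictMonoOn (kernelMass K) (Ici 0)) {t : ℝ} (ht : 0 < t) :
    0 < kernelMass K t := by
  simpa using hK_inc self_mem_Ici ht.le ht

theorem kernelMass_le_mul (hK_inc : StrictMonoOn (kernelMass K) (Ici 0)) {t C : ℝ} (ht : 0 < t)
    (hC : ∀ s ∈ Icc 0 t, K t s ≤ C) : kernelMass K t ≤ C * t := by
  have hint : IntervalIntegrable (K t) MeasureTheory.volume 0 t :=
    intervalIntegral.intervalIntegrable_of_integral_ne_zero (kernelMass_pos hK_inc ht).ne'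
  calc kernelMass K t ≤ ∫ _ in (0:ℝ)..t, C :=
        intervalIntegral.integral_mono_on ht.le hint intervalIntegrable_const hC
    _ = C * t := by simp [mul_comm]

theorem tendsto_kernelMass_nhdsGT_zero
    (hK_bdd : ∀ R > (0:ℝ), ∃ C : ℝ, ∀ t ∈ Icc (-R) R, ∀ s ∈ Icc (-R) R, K t s ≤ C)
    (hK_inc : StrictMonoOn (kernelMass K) (Ici 0)) :
    Tendsto (kernelMass K) (𝓝[>] 0) (𝓝 0) := by
  obtain ⟨C, hC⟩ := hK_bdd 1 one_pos
  have hlin : Tendsto (fun t : ℝ => C * t) (𝓝[>] 0) (𝓝 0) := by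
    simpa using ((continuous_const_mul C).tendsto 0).mono_left nhdsWithin_le_nhds
  refine tendsto_of_tendsto_of_tendsto_of_le_of_le' tendsto_const_nhds hlin ?_ ?_
  · filter_upwards [self_mem_nhdsWithin] with t ht using (kernelMass_pos hK_inc ht).le
  · filter_upwards [Ioc_mem_nhdsGT one_pos] with t ⟨ht0, ht1⟩
    refine kernelMass_le_mul hK_inc ht0 fun s ⟨hs0, hst⟩ => hC t ?_ s ?_
    · exact ⟨by linarith, ht1⟩
    · exact ⟨by linarith, hst.trans ht1⟩

end kernelMass

theorem exists_pos_mul_lt_apply_of_eq_apply_mul {G : ℝ → ℝ} {M Z a : ℝ} (hZ : 0 < Z) (ha : 0 < a)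
    (hMa : M * a < 1) (hfix : Z = G (Z * a)) : ∃ y > (0:ℝ), G y > M * y :=
  ⟨Z * a, mul_pos hZ ha, by rw [← hfix]; nlinarith⟩

end

theorem prop1_necessity_general (K : ℝ → ℝ → ℝ)
    (hK_bdd : ∀ R > (0:ℝ), ∃ C : ℝ, ∀ t ∈ Set.Icc (-R) R, ∀ s ∈ Set.Icc (-R) R, K t s ≤ C)
    (hK_inc : StrictMonoOn (fun t => ∫ s in (0:ℝ)..t, K t s) (Set.Ici 0))
    (G : ℝ → ℝ)
    (c₁ : ℝ) (hc₁ : 0 < c₁) (hc₁' : c₁ ≤ 1)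
    (hsol : ∀ ε > (0:ℝ), ∃ h₀ : ℝ, 0 < h₀ ∧ h₀ ≤ ε ∧ ∃ Z₀ > (0:ℝ),
      Z₀ = G (Z₀ * ∫ s in (0:ℝ)..(c₁ * h₀), K (c₁ * h₀) s)) :
    ∀ M > (0:ℝ), ∃ y > (0:ℝ), G y > M * y := by
  intro M hM
  have hsmall : ∀ᶠ t in 𝓝[>] 0, kernelMass K t < M⁻¹ :=
    tendsto_kernelMass_nhdsGT_zero hK_bdd hK_inc (Iio_mem_nhds (inv_pos.2 hM))
  obtain ⟨ε, hε, hεsmall⟩ := mem_nhdsGT_iff_exists_Ioc_subset.1 hsmall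
  obtain ⟨h₀, hh₀, hh₀ε, Z₀, hZ₀, hfix⟩ := hsol ε hε
  have ht : c₁ * h₀ ∈ Ioc 0 ε := ⟨mul_pos hc₁ hh₀, (mul_le_of_le_one_left hh₀.le hc₁').trans hh₀ε⟩
  have hMa : M * kernelMass K (c₁ * h₀) < 1 := by
    simpa [hM.ne'] using mul_lt_mul_of_pos_left (hεsmall ht) hM
  exact exists_pos_mul_lt_apply_of_eq_apply_mul hZ₀ (kernelMass_pos hK_inc ht.1) hMa hfix

/-- Proposition 1, necessity direction, case 1 (`m = 1`, `c₁ > 0`): with `K` satisfying the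
general conditions on the kernel and `G` satisfying the general conditions on the nonlinearity,
if for every `ε > 0` there is a first stepsize `0 < h₀ ≤ ε` for which the first collocation
equation has a strictly positive solution `Z₀`, then `G y / y` is unbounded on `(0, ∞)`. -/
theorem prop1_necessity (K : ℝ → ℝ → ℝ)
    (hK_nonneg : ∀ t s : ℝ, 0 ≤ K t s)
    (hK_bdd : ∀ R > (0:ℝ), ∃ C : ℝ, ∀ t ∈ Set.Icc (-R) R, ∀ s ∈ Set.Icc (-R) R, K t s ≤ C)
    (hK_supp : ∀ t s : ℝ, (s < 0 ∨ t < s) → K t s = 0)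
    (hK_int : ∀ t > (0:ℝ), IntervalIntegrable (fun s => K t s) MeasureTheory.volume 0 t)
    (hK_inc : StrictMonoOn (fun t => ∫ s in (0:ℝ)..t, K t s) (Set.Ici 0))
    (G : ℝ → ℝ)
    (hG_cont : ContinuousOn G (Set.Ici 0))
    (hG_mono : StrictMonoOn G (Set.Ici 0))
    (hG_nonneg : ∀ y ≥ (0:ℝ), 0 ≤ G y)
    (hG0 : G 0 = 0)
    (c₁ : ℝ) (hc₁ : 0 < c₁) (hc₁' : c₁ ≤ 1)
    (hsol : ∀ ε > (0:ℝ), ∃ h₀ : ℝ, 0 < h₀ ∧ h₀ ≤ ε ∧ ∃ Z₀ > (0:ℝ),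
      Z₀ = G (Z₀ * ∫ s in (0:ℝ)..(c₁ * h₀), K (c₁ * h₀) s)) :
    ∀ M > (0:ℝ), ∃ y > (0:ℝ), G y > M * y :=
  prop1_necessity_general K hK_bdd hK_inc G c₁ hc₁ hc₁' hsol
end

section
/- Let k : [0,∞) → [0,∞) be locally bounded and locally integrable with x ↦ ∫₀ˣ k(s) ds strictly increasing, and let G satisfy the general conditions on the nonlinearity with G(y)/y unbounded near zero and bounded away from zero. Fix c₁ ∈ (0,1]. Then there exists H > 0 such that for every T > 0 and every mesh 0 = t₀ < t₁ < ... < t_N = T all of whose stepsizes h_n = t_{n+1} − t_n satisfy h_n ≤ H, there exists a nontrivial collocation solution: strictly positive reals Z₀, ..., Z_{N−1} satisfying, for every n = 0, ..., N−1, Z_n = G( Σ_{l=0}^{n−1} Z_l ∫_{t_l}^{t_{l+1}} k(t_n + c₁h_n − s) ds + Z_n ∫₀^{c₁h_n} k(u) du ). -/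
/-!
The collocation system is lower triangular, so it is solved by forward substitution: at step `n`
the history term `A_n ≥ 0` is already known and `Z_n` must solve the scalar equation
`z = G (A_n + z κ_n)` with `κ_n = ∫₀^{c₁hₙ} k > 0`. Take `M` with `G y ≤ M y` for `y > 1`; since
the primitive of `k` is continuous at `0`, a small `H` forces `M κ_n < 1`, and then the scalar
equation has a positive root by the intermediate value theorem.
-/

open Filter Set Topology

/-- Superlinearity of `G` at `0` gives `G (A + z κ) > z` for small `z`, and `M κ < 1` gives
`G (A + z κ) < z` for large `z`. -/
theorem exists_pos_eq_apply_add_mul_s13 {G : ℝ → ℝ} (hG_cont : ContinuousOn G (Ici 0))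
    (hG_mono : StrictMonoOn G (Ici 0))
    (hG_unb0 : ∀ δ > (0:ℝ), ∀ M > (0:ℝ), ∃ y : ℝ, 0 < y ∧ y < δ ∧ G y > M * y)
    {t M : ℝ} (hG_le : ∀ y > t, G y ≤ M * y) {A κ : ℝ} (hA : 0 ≤ A) (hκ : 0 < κ)
    (hMκ : M * κ < 1) :
    ∃ z : ℝ, 0 < z ∧ z = G (A + z * κ) := by
  obtain ⟨y, hy, -, hGy⟩ := hG_unb0 1 one_pos κ⁻¹ (inv_pos.2 hκ)
  set z₁ := y / κ
  have hz₁ : 0 < z₁ := div_pos hy hκ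
  have hz₁_lt : z₁ < G (A + z₁ * κ) := calc
    z₁ = κ⁻¹ * y := div_eq_inv_mul y κ
    _ < G y := hGy
    _ ≤ G (A + z₁ * κ) := by
      rw [div_mul_cancel₀ y hκ.ne']
      exact hG_mono.monotoneOn hy.le (by simp only [mem_Ici]; linarith) (by linarith)
  have h_large : ∀ᶠ z in atTop, z₁ ≤ z ∧ t < A + z * κ ∧ M * A < z * (1 - M * κ) :=
    (eventually_ge_atTop z₁).and <|
      ((tendsto_atTop_add_const_left _ A (tendsto_id.atTop_mul_const hκ)).eventually_gt_atTop
        t).and ((tendsto_id.atTop_mul_const (sub_pos.2 hMκ)).eventually_gt_atTop (M * A))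
  obtain ⟨z₂, hz₁₂, ht, hMA⟩ := h_large.exists
  have hz₂_gt : G (A + z₂ * κ) < z₂ := by linarith [hG_le _ ht]
  have h_arg_nonneg : ∀ z ∈ Icc z₁ z₂, A + z * κ ∈ Ici 0 := fun z hz => by
    simp only [mem_Ici]; nlinarith [hz.1]
  have hcont : ContinuousOn (fun z => G (A + z * κ) - z) (Icc z₁ z₂) :=
    (hG_cont.comp (by fun_prop) h_arg_nonneg).sub continuousOn_id
  obtain ⟨z, hz, hz_root⟩ := intermediate_value_Icc' hz₁₂ hcont
    (show (0:ℝ) ∈ Icc (G (A + z₂ * κ) - z₂) (G (A + z₁ * κ) - z₁) from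
      ⟨by linarith, by linarith⟩)
  exact ⟨z, hz₁.trans_le hz.1, by linarith [show G (A + z * κ) - z = 0 from hz_root]⟩

theorem exists_pos_intervalIntegral_lt {k : ℝ → ℝ}
    (hk_int : ∀ x > (0:ℝ), IntervalIntegrable k MeasureTheory.volume 0 x) {ε : ℝ} (hε : 0 < ε) :
    ∃ δ > 0, ∫ s in (0:ℝ)..δ, k s < ε := by
  have hcont : ContinuousWithinAt (fun x => ∫ s in (0:ℝ)..x, k s) (Icc 0 1) 0 := by
    have := intervalIntegral.continuousOn_primitive_interval' (hk_int 1 one_pos) left_mem_uIcc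
    rw [uIcc_of_le zero_le_one] at this
    exact this 0 (left_mem_Icc.2 zero_le_one)
  have hlim : Tendsto (fun x => ∫ s in (0:ℝ)..x, k s) (𝓝[>] 0) (𝓝 0) := by
    simpa using (hcont.mono_of_mem_nhdsWithin (Icc_mem_nhdsGT one_pos)).tendsto
  obtain ⟨δ, hδ_lt, hδ⟩ := ((hlim.eventually (gt_mem_nhds hε)).and self_mem_nhdsWithin).exists
  exact ⟨δ, hδ, hδ_lt⟩

theorem intervalIntegral_comp_sub_nonneg {k : ℝ → ℝ} (hk : ∀ x : ℝ, 0 ≤ x → 0 ≤ k x)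
    {a b τ : ℝ} (hab : a ≤ b) (hbτ : b ≤ τ) : 0 ≤ ∫ s in a..b, k (τ - s) :=
  intervalIntegral.integral_nonneg hab fun _ hs => hk _ (by linarith [hs.2])

theorem exists_forall_lt_of_extend {α : Type*} {P : ℕ → (ℕ → α) → Prop} {N : ℕ}
    (hP : ∀ n Z Z', (∀ l ≤ n, Z l = Z' l) → P n Z → P n Z')
    (hstep : ∀ n < N, ∀ Z, (∀ m < n, P m Z) → ∃ z, P n (Function.update Z n z))
    (Z₀ : ℕ → α) : ∃ Z, ∀ n < N, P n Z := by
  suffices ∀ n ≤ N, ∃ Z, ∀ m < n, P m Z from this N le_rfl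
  intro n
  induction n with
  | zero => exact fun _ => ⟨Z₀, by simp⟩
  | succ n ih =>
    intro hn
    obtain ⟨Z, hZ⟩ := ih (by omega)
    obtain ⟨z, hz⟩ := hstep n hn Z hZ
    refine ⟨Function.update Z n z, fun m hm => ?_⟩
    rcases Nat.lt_succ_iff_lt_or_eq.1 hm with hm | rfl
    · exact hP m Z _ (fun l hl => (Function.update_of_ne (by omega) _ _).symm) (hZ m hm)
    · exact hz

theorem exists_pos_solution_of_forward_system {G : ℝ → ℝ} (hG_cont : ContinuousOn G (Ici 0))
    (hG_mono : StrictMonoOn G (Ici 0))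
    (hG_unb0 : ∀ δ > (0:ℝ), ∀ M > (0:ℝ), ∃ y : ℝ, 0 < y ∧ y < δ ∧ G y > M * y)
    {t M : ℝ} (hG_le : ∀ y > t, G y ≤ M * y) {N : ℕ} {w : ℕ → ℕ → ℝ} {κ : ℕ → ℝ}
    (hw : ∀ n < N, ∀ l < n, 0 ≤ w n l) (hκ : ∀ n < N, 0 < κ n ∧ M * κ n < 1) :
    ∃ Z : ℕ → ℝ, ∀ n < N,
      0 < Z n ∧ Z n = G ((∑ l ∈ Finset.range n, Z l * w n l) + Z n * κ n) := by
  refine exists_forall_lt_of_extend ?_ (fun n hn Z hZ => ?_) 0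
  · rintro n Z Z' hZZ' ⟨hpos, heq⟩
    have hsum : ∑ l ∈ Finset.range n, Z l * w n l = ∑ l ∈ Finset.range n, Z' l * w n l :=
      Finset.sum_congr rfl fun l hl => by rw [hZZ' l (Finset.mem_range.1 hl).le]
    rw [← hZZ' n le_rfl, ← hsum]
    exact ⟨hpos, heq⟩
  · have hA : 0 ≤ ∑ l ∈ Finset.range n, Z l * w n l :=
      Finset.sum_nonneg fun l hl =>
        mul_nonneg (hZ l (Finset.mem_range.1 hl)).1.le (hw n hn l (Finset.mem_range.1 hl))
    obtain ⟨z, hz, hz_eq⟩ :=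
      exists_pos_eq_apply_add_mul_s13 hG_cont hG_mono hG_unb0 hG_le hA (hκ n hn).1 (hκ n hn).2
    have hsum : ∑ l ∈ Finset.range n, Function.update Z n z l * w n l
        = ∑ l ∈ Finset.range n, Z l * w n l :=
      Finset.sum_congr rfl fun l hl => by
        rw [Function.update_of_ne (Finset.mem_range.1 hl).ne]
    refine ⟨z, ?_⟩
    rw [hsum, Function.update_self]
    exact ⟨hz, hz_eq⟩

theorem prop2_fine_meshes_general (k : ℝ → ℝ)
    (hk_nonneg : ∀ x : ℝ, 0 ≤ x → 0 ≤ k x)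
    (hk_int : ∀ x > (0:ℝ), IntervalIntegrable k MeasureTheory.volume 0 x)
    (hk_inc : StrictMonoOn (fun x => ∫ s in (0:ℝ)..x, k s) (Set.Ici 0))
    (G : ℝ → ℝ)
    (hG_cont : ContinuousOn G (Set.Ici 0))
    (hG_mono : StrictMonoOn G (Set.Ici 0))
    (hG_unb0 : ∀ δ > (0:ℝ), ∀ M > (0:ℝ), ∃ y : ℝ, 0 < y ∧ y < δ ∧ G y > M * y)
    (hG_bdd : ∀ t > (0:ℝ), ∃ M > (0:ℝ), ∀ y > t, G y ≤ M * y)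
    (c₁ : ℝ) (hc₁ : 0 < c₁) :
    ∃ H > (0:ℝ), ∀ T > (0:ℝ), ∀ N : ℕ, ∀ t : ℕ → ℝ,
      t 0 = 0 → t N = T → (∀ n < N, t n < t (n + 1)) →
      (∀ n < N, t (n + 1) - t n ≤ H) →
      ∃ Z : ℕ → ℝ, (∀ n < N, 0 < Z n) ∧
        ∀ n < N, Z n = G ((∑ l ∈ Finset.range n,
            Z l * ∫ s in (t l)..(t (l + 1)), k (t n + c₁ * (t (n + 1) - t n) - s))
          + Z n * ∫ u in (0:ℝ)..(c₁ * (t (n + 1) - t n)), k u) := by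
  obtain ⟨M, hM, hG_le⟩ := hG_bdd 1 one_pos
  obtain ⟨δ, hδ, hFδ⟩ := exists_pos_intervalIntegral_lt hk_int (inv_pos.2 hM)
  refine ⟨δ / c₁, div_pos hδ hc₁, fun T _ N t _ _ hmesh hstep => ?_⟩
  have ht_mono : MonotoneOn t (Iic N) := monotoneOn_of_le_succ ordConnected_Iic
    fun n _ _ hn => (hmesh n (Order.succ_eq_add_one n ▸ hn : n + 1 ≤ N)).le
  have hw : ∀ n < N, ∀ l < n,
      0 ≤ ∫ s in (t l)..(t (l + 1)), k (t n + c₁ * (t (n + 1) - t n) - s) := fun n hn l hl =>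
    intervalIntegral_comp_sub_nonneg hk_nonneg (hmesh l (hl.trans hn)).le <| by
      linarith [ht_mono (mem_Iic.2 (by omega)) (mem_Iic.2 hn.le) hl,
        mul_pos hc₁ (sub_pos.2 (hmesh n hn))]
  have hκ : ∀ n < N, 0 < ∫ u in (0:ℝ)..(c₁ * (t (n + 1) - t n)), k u ∧
      M * ∫ u in (0:ℝ)..(c₁ * (t (n + 1) - t n)), k u < 1 := by
    intro n hn
    have hh : 0 < c₁ * (t (n + 1) - t n) := mul_pos hc₁ (sub_pos.2 (hmesh n hn))
    have hhδ : c₁ * (t (n + 1) - t n) ≤ δ := (le_div_iff₀' hc₁).1 (hstep n hn)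
    constructor
    · simpa using hk_inc self_mem_Ici hh.le hh
    · calc M * ∫ u in (0:ℝ)..(c₁ * (t (n + 1) - t n)), k u ≤ M * ∫ u in (0:ℝ)..δ, k u :=
            mul_le_mul_of_nonneg_left (hk_inc.monotoneOn hh.le hδ.le hhδ) hM.le
        _ < M * M⁻¹ := mul_lt_mul_of_pos_left hFδ hM
        _ = 1 := mul_inv_cancel₀ hM.ne'
  obtain ⟨Z, hZ⟩ :=
    exists_pos_solution_of_forward_system hG_cont hG_mono hG_unb0 hG_le hw hκ
  exact ⟨Z, fun n hn => (hZ n hn).1, fun n hn => (hZ n hn).2⟩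

/-- Proposition 2, existence for fine meshes, case 1 (`m = 1`, `c₁ > 0`), convolution kernel
`K(t,s) = k(t-s)`: with `k` locally bounded, locally integrable, with strictly increasing
primitive, and `G` satisfying the general conditions on the nonlinearity with `G y / y`
unbounded near zero but bounded away from zero, there exists `H > 0` such that every mesh with
all stepsizes at most `H` admits a nontrivial (strictly positive) collocation solution. -/
theorem prop2_fine_meshes (k : ℝ → ℝ)
    (hk_nonneg : ∀ x : ℝ, 0 ≤ x → 0 ≤ k x)
    (hk_bdd : ∀ R > (0:ℝ), ∃ C : ℝ, ∀ x ∈ Set.Icc (0:ℝ) R, k x ≤ C)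
    (hk_int : ∀ x > (0:ℝ), IntervalIntegrable k MeasureTheory.volume 0 x)
    (hk_inc : StrictMonoOn (fun x => ∫ s in (0:ℝ)..x, k s) (Set.Ici 0))
    (G : ℝ → ℝ)
    (hG_cont : ContinuousOn G (Set.Ici 0))
    (hG_mono : StrictMonoOn G (Set.Ici 0))
    (hG_nonneg : ∀ y ≥ (0:ℝ), 0 ≤ G y)
    (hG0 : G 0 = 0)
    (hG_unb0 : ∀ δ > (0:ℝ), ∀ M > (0:ℝ), ∃ y : ℝ, 0 < y ∧ y < δ ∧ G y > M * y)
    (hG_bdd : ∀ t > (0:ℝ), ∃ M > (0:ℝ), ∀ y > t, G y ≤ M * y)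
    (c₁ : ℝ) (hc₁ : 0 < c₁) (hc₁' : c₁ ≤ 1) :
    ∃ H > (0:ℝ), ∀ T > (0:ℝ), ∀ N : ℕ, ∀ t : ℕ → ℝ,
      t 0 = 0 → t N = T → (∀ n < N, t n < t (n + 1)) →
      (∀ n < N, t (n + 1) - t n ≤ H) →
      ∃ Z : ℕ → ℝ, (∀ n < N, 0 < Z n) ∧
        ∀ n < N, Z n = G ((∑ l ∈ Finset.range n,
            Z l * ∫ s in (t l)..(t (l + 1)), k (t n + c₁ * (t (n + 1) - t n) - s))
          + Z n * ∫ u in (0:ℝ)..(c₁ * (t (n + 1) - t n)), k u) :=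
  prop2_fine_meshes_general k hk_nonneg hk_int hk_inc G hG_cont hG_mono hG_unb0 hG_bdd c₁ hc₁
end

section
/- Let K satisfy the general conditions on the kernel, and let G satisfy the general conditions on the nonlinearity with G(y)/y unbounded near zero and such that there exists a sequence (yₙ) of positive reals with yₙ → +∞ and G(yₙ)/yₙ → 0. Fix c₁ ∈ (0,1]. Then there is unconditional existence: for every T > 0 and every mesh 0 = t₀ < t₁ < ... < t_N = T with stepsizes h_n = t_{n+1} − t_n, there exist strictly positive reals Z₀, ..., Z_{N−1} satisfying, for every n = 0, ..., N−1, Z_n = G( Σ_{l=0}^{n−1} Z_l ∫_{t_l}^{t_{l+1}} K(t_n + c₁h_n, s) ds + Z_n ∫_{t_n}^{t_n + c₁h_n} K(t_n + c₁h_n, s) ds ), i.e. a nontrivial collocation solution exists in any interval and for any mesh. -/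
/-!
At step `n` the collocation equation reads `z = G (A + z * B)`, where the lag term `A ≥ 0` only
involves the already computed `Z₀, …, Z_{n-1}` and `B = ∫_{tₙ}^{τₙ} K(τₙ, s) ds ≥ 0`, with
`τₙ = tₙ + c₁ hₙ`. Since `∫₀^{τₙ} K(τₙ, s) ds > 0`, `A` and `B` cannot both vanish. If `B = 0`
then `z = G A` works. If `B > 0`, the map `z ↦ G (A + z * B)` lies above the diagonal at some
small `z₀` (because `G y / y` is unbounded near `0`) and below it at some large `z₁` (because
`G y / y` gets arbitrarily small along `yₙ → ∞`), so the intermediate value theorem gives a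
positive fixed point. Solving step by step yields the whole solution.
-/

open MeasureTheory Filter Set

theorem monotoneOn_nat_Iic_of_le_succ {α : Type*} [Preorder α] {f : ℕ → α} {N : ℕ}
    (hf : ∀ n < N, f n ≤ f (n + 1)) : MonotoneOn f (Set.Iic N) := by
  intro i _ j hj hij
  induction j, hij using Nat.le_induction with
  | base => rfl
  | succ j _ ih => exact (ih (Nat.le_of_succ_le hj)).trans (hf j hj)

theorem exists_forall_lt_of_causal {α : Type*} [Nonempty α] (P : (ℕ → α) → ℕ → Prop) (N : ℕ)
    (hP : ∀ n Z Z', (∀ l ≤ n, Z l = Z' l) → P Z n → P Z' n)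
    (hstep : ∀ n < N, ∀ Z, (∀ k < n, P Z k) → ∃ z, P (Function.update Z n z) n) :
    ∃ Z, ∀ n < N, P Z n := by
  suffices ∀ m ≤ N, ∃ Z, ∀ n < m, P Z n from this N le_rfl
  intro m hm
  induction m with
  | zero => exact ⟨fun _ => Classical.arbitrary α, fun n hn => absurd hn n.not_lt_zero⟩
  | succ m ih =>
    obtain ⟨Z, hZ⟩ := ih (Nat.le_of_succ_le hm)
    obtain ⟨z, hz⟩ := hstep m hm Z hZ
    refine ⟨Function.update Z m z, fun n hn => ?_⟩
    rcases (Nat.lt_succ_iff_lt_or_eq.mp hn) with hnm | rfl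
    · exact hP n Z _ (fun l hl => (Function.update_of_ne (by omega) _ _).symm) (hZ n hnm)
    · exact hz

theorem frequently_lt_mul_of_tendsto_div {y : ℕ → ℝ} {g : ℝ → ℝ}
    (hy : Tendsto y atTop atTop) (hg : Tendsto (fun n => g (y n) / y n) atTop (nhds 0)) :
    ∀ ε > 0, ∃ᶠ x in atTop, g x < ε * x := by
  intro ε hε
  refine hy.frequently (Eventually.frequently ?_)
  filter_upwards [hy.eventually_gt_atTop 0, hg.eventually_lt_const hε] with n hpos hlt
  exact (div_lt_iff₀ hpos).mp hlt

section FixedPoint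

variable {G : ℝ → ℝ} {A B : ℝ}

theorem exists_pos_apply_add_mul_eq_of_pos (hG_cont : ContinuousOn G (Ici 0))
    (hG_mono : MonotoneOn G (Ici 0)) (hG_zero : ∀ M > 0, ∃ y > 0, M * y < G y)
    (hG_top : ∀ ε > 0, ∃ᶠ y in atTop, G y < ε * y) (hA : 0 ≤ A) (hB : 0 < B) :
    ∃ z > 0, G (A + z * B) = z := by
  obtain ⟨y₀, hy₀, hGy₀⟩ := hG_zero B⁻¹ (inv_pos.mpr hB)
  set z₀ := y₀ / B
  have hz₀ : 0 < z₀ := div_pos hy₀ hB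
  have hz₀B : z₀ * B = y₀ := div_mul_cancel₀ _ hB.ne'
  have below : z₀ ≤ G (A + z₀ * B) := calc
    z₀ = B⁻¹ * y₀ := (inv_mul_eq_div B y₀).symm
    _ ≤ G y₀ := hGy₀.le
    _ ≤ G (A + z₀ * B) := hG_mono hy₀.le (by simp only [mem_Ici]; positivity) (by linarith)
  obtain ⟨y₁, hGy₁, hy₁⟩ :=
    ((hG_top (2 * B)⁻¹ (by positivity)).and_eventually
      (eventually_ge_atTop (max (2 * A) (2 * (B * z₀))))).exists
  have hAy₁ : 2 * A ≤ y₁ := (le_max_left _ _).trans hy₁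
  have hz₀y₁ : 2 * (B * z₀) ≤ y₁ := (le_max_right _ _).trans hy₁
  set z₁ := (y₁ - A) / B
  have hz₁B : A + z₁ * B = y₁ := by rw [div_mul_cancel₀ _ hB.ne']; ring
  have hz₀z₁ : z₀ ≤ z₁ := by rw [le_div_iff₀ hB]; linarith
  have above : G (A + z₁ * B) ≤ z₁ := calc
    G (A + z₁ * B) = G y₁ := by rw [hz₁B]
    _ ≤ (2 * B)⁻¹ * y₁ := hGy₁.le
    _ ≤ z₁ := by rw [le_div_iff₀ hB]; field_simp; linarith
  have hcont : ContinuousOn (fun z => G (A + z * B)) (Icc z₀ z₁) :=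
    hG_cont.comp (by fun_prop) fun z hz => by
      simp only [mem_Ici]; nlinarith [hz.1]
  obtain ⟨z, hz, hfix⟩ := exists_mem_Icc_isFixedPt hcont hz₀z₁ below above
  exact ⟨z, hz₀.trans_le hz.1, hfix⟩

theorem exists_pos_eq_apply_add_mul_s15 (hG_cont : ContinuousOn G (Ici 0))
    (hG_mono : MonotoneOn G (Ici 0)) (hG_pos : ∀ y > 0, 0 < G y)
    (hG_zero : ∀ M > 0, ∃ y > 0, M * y < G y)
    (hG_top : ∀ ε > 0, ∃ᶠ y in atTop, G y < ε * y) (hA : 0 ≤ A) (hB : 0 ≤ B)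
    (hAB : 0 < A ∨ 0 < B) : ∃ z > 0, z = G (A + z * B) := by
  rcases hB.eq_or_lt with rfl | hB
  · exact ⟨G A, hG_pos A (hAB.resolve_right (lt_irrefl 0)), by rw [mul_zero, add_zero]⟩
  · obtain ⟨z, hz, hfix⟩ := exists_pos_apply_add_mul_eq_of_pos hG_cont hG_mono hG_zero hG_top hA hB
    exact ⟨z, hz, hfix.symm⟩

end FixedPoint

theorem mul_integral_nonneg_of_mem_range {f : ℝ → ℝ} {t Z : ℕ → ℝ} {n : ℕ}
    (hf : ∀ x, 0 ≤ f x) (ht : MonotoneOn t (Iic n)) (hZ : ∀ l < n, 0 < Z l) :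
    ∀ l ∈ Finset.range n, 0 ≤ Z l * ∫ x in (t l)..(t (l + 1)), f x := fun l hl =>
  have hl := Finset.mem_range.mp hl
  mul_nonneg (hZ l hl).le
    (intervalIntegral.integral_nonneg (ht hl.le hl (Nat.le_succ l)) fun x _ => hf x)

theorem sum_mul_integral_pos_or_integral_pos {f : ℝ → ℝ} {t Z : ℕ → ℝ} {n : ℕ} {b : ℝ}
    (hf : ∀ x, 0 ≤ f x) (ht : MonotoneOn t (Iic n)) (hb : t n ≤ b)
    (hfi : IntervalIntegrable f volume (t 0) b) (hpos : 0 < ∫ x in (t 0)..b, f x)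
    (hZ : ∀ l < n, 0 < Z l) :
    0 < ∑ l ∈ Finset.range n, Z l * ∫ x in (t l)..(t (l + 1)), f x ∨
      0 < ∫ x in (t n)..b, f x := by
  have mem : ∀ l ≤ n, t l ∈ uIcc (t 0) b := fun l hl =>
    Icc_subset_uIcc ⟨ht (Nat.zero_le n) hl (Nat.zero_le l), (ht hl self_mem_Iic hl).trans hb⟩
  have hfi' : ∀ {x y}, x ∈ uIcc (t 0) b → y ∈ uIcc (t 0) b → IntervalIntegrable f volume x y :=
    fun hx hy => hfi.mono_set (uIcc_subset_uIcc hx hy)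
  have hterm_nonneg := mul_integral_nonneg_of_mem_range hf ht hZ
  by_contra! ⟨hA, hB⟩
  have hterm := (Finset.sum_eq_zero_iff_of_nonneg hterm_nonneg).mp
    (hA.antisymm (Finset.sum_nonneg hterm_nonneg))
  have hhead : ∫ x in (t 0)..(t n), f x = 0 := by
    rw [← intervalIntegral.sum_integral_adjacent_intervals
      fun l hl => hfi' (mem l hl.le) (mem (l + 1) hl)]
    exact Finset.sum_eq_zero fun l hl =>
      (mul_eq_zero.mp (hterm l hl)).resolve_left (hZ l (Finset.mem_range.mp hl)).ne'
  have hsplit := intervalIntegral.integral_add_adjacent_intervals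
    (hfi' (mem 0 (Nat.zero_le n)) (mem n le_rfl)) (hfi' (mem n le_rfl) right_mem_uIcc)
  linarith

theorem exists_pos_collocation_value {K : ℝ → ℝ → ℝ} {G : ℝ → ℝ} {t Z : ℕ → ℝ} {n : ℕ} {τ : ℝ}
    (hK_nonneg : ∀ t s : ℝ, 0 ≤ K t s)
    (hK_int : ∀ t > (0:ℝ), IntervalIntegrable (fun s => K t s) volume 0 t)
    (hK_inc : StrictMonoOn (fun t => ∫ s in (0:ℝ)..t, K t s) (Ici 0))
    (hG_cont : ContinuousOn G (Ici 0)) (hG_mono : StrictMonoOn G (Ici 0)) (hG0 : G 0 = 0)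
    (hG_zero : ∀ M > 0, ∃ y > 0, M * y < G y)
    (hG_top : ∀ ε > 0, ∃ᶠ y in atTop, G y < ε * y)
    (ht0 : t 0 = 0) (ht : MonotoneOn t (Iic n)) (hτ : t n < τ) (hZ : ∀ l < n, 0 < Z l) :
    ∃ z > 0, z = G ((∑ l ∈ Finset.range n, Z l * ∫ s in (t l)..(t (l + 1)), K τ s)
      + z * ∫ s in (t n)..τ, K τ s) := by
  have hτ0 : 0 < τ := (ht0 ▸ ht (Nat.zero_le n) self_mem_Iic (Nat.zero_le n)).trans_lt hτ
  have hpos : 0 < ∫ s in (t 0)..τ, K τ s := by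
    simpa [ht0] using hK_inc self_mem_Ici hτ0.le hτ0
  have hG_pos : ∀ y > 0, 0 < G y := fun y hy => hG0 ▸ hG_mono self_mem_Ici hy.le hy
  exact exists_pos_eq_apply_add_mul_s15 hG_cont hG_mono.monotoneOn hG_pos hG_zero hG_top
    (Finset.sum_nonneg (mul_integral_nonneg_of_mem_range (hK_nonneg τ) ht hZ))
    (intervalIntegral.integral_nonneg hτ.le fun s _ => hK_nonneg τ s)
    (sum_mul_integral_pos_or_integral_pos (hK_nonneg τ) ht hτ.le (ht0 ▸ hK_int τ hτ0) hpos hZ)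

theorem prop3_unconditional_general (K : ℝ → ℝ → ℝ)
    (hK_nonneg : ∀ t s : ℝ, 0 ≤ K t s)
    (hK_int : ∀ t > (0:ℝ), IntervalIntegrable (fun s => K t s) MeasureTheory.volume 0 t)
    (hK_inc : StrictMonoOn (fun t => ∫ s in (0:ℝ)..t, K t s) (Set.Ici 0))
    (G : ℝ → ℝ)
    (hG_cont : ContinuousOn G (Set.Ici 0))
    (hG_mono : StrictMonoOn G (Set.Ici 0))
    (hG0 : G 0 = 0)
    (hG_unb0 : ∀ δ > (0:ℝ), ∀ M > (0:ℝ), ∃ y : ℝ, 0 < y ∧ y < δ ∧ G y > M * y)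
    (yseq : ℕ → ℝ)
    (hseq_div : Filter.Tendsto yseq Filter.atTop Filter.atTop)
    (hseq_ratio : Filter.Tendsto (fun n => G (yseq n) / yseq n) Filter.atTop (nhds 0))
    (c₁ : ℝ) (hc₁ : 0 < c₁) :
    ∀ T > (0:ℝ), ∀ N : ℕ, ∀ t : ℕ → ℝ,
      t 0 = 0 → t N = T → (∀ n < N, t n < t (n + 1)) →
      ∃ Z : ℕ → ℝ, (∀ n < N, 0 < Z n) ∧
        ∀ n < N, Z n = G ((∑ l ∈ Finset.range n,
            Z l * ∫ s in (t l)..(t (l + 1)), K (t n + c₁ * (t (n + 1) - t n)) s)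
          + Z n * ∫ s in (t n)..(t n + c₁ * (t (n + 1) - t n)),
              K (t n + c₁ * (t (n + 1) - t n)) s) := by
  intro T _ N t ht0 _ ht
  have hG_zero : ∀ M > 0, ∃ y > 0, M * y < G y := fun M hM =>
    let ⟨y, hy, _, hGy⟩ := hG_unb0 1 one_pos M hM; ⟨y, hy, hGy⟩
  have hG_top := frequently_lt_mul_of_tendsto_div hseq_div hseq_ratio
  have hmono := monotoneOn_nat_Iic_of_le_succ fun n hn => (ht n hn).le
  obtain ⟨Z, hZ⟩ := exists_forall_lt_of_causal (fun Z n => 0 < Z n ∧ Z n = G ((∑ l ∈ Finset.range n,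
      Z l * ∫ s in (t l)..(t (l + 1)), K (t n + c₁ * (t (n + 1) - t n)) s)
      + Z n * ∫ s in (t n)..(t n + c₁ * (t (n + 1) - t n)), K (t n + c₁ * (t (n + 1) - t n)) s))
    N (fun n Z Z' hZZ' ⟨hpos, heq⟩ => by
      rw [← hZZ' n le_rfl, Finset.sum_congr rfl fun l hl => by
        rw [← hZZ' l (Finset.mem_range.mp hl).le]]
      exact ⟨hpos, heq⟩)
    fun n hn Z hZ => by
      obtain ⟨z, hz, hfix⟩ := exists_pos_collocation_value hK_nonneg hK_int hK_inc hG_cont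
        hG_mono hG0 hG_zero hG_top ht0 (hmono.mono (Iic_subset_Iic.mpr hn.le))
        (lt_add_of_pos_right _ (mul_pos hc₁ (sub_pos.mpr (ht n hn)))) fun l hl => (hZ l hl).1
      refine ⟨z, by simpa using hz, ?_⟩
      rw [Function.update_self, Finset.sum_congr rfl fun l hl => by
        rw [Function.update_of_ne (Finset.mem_range.mp hl).ne]]
      exact hfix
  exact ⟨Z, fun n hn => (hZ n hn).1, fun n hn => (hZ n hn).2⟩

/-- Proposition 3, unconditional existence, case 1 (`m = 1`, `c₁ > 0`): with `K` satisfying the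
general conditions on the kernel and `G` satisfying the general conditions on the nonlinearity
with `G y / y` unbounded near zero and admitting a sequence of positive reals `yₙ → +∞` with
`G yₙ / yₙ → 0`, a nontrivial (strictly positive) collocation solution exists in any interval
and for any mesh. -/
theorem prop3_unconditional (K : ℝ → ℝ → ℝ)
    (hK_nonneg : ∀ t s : ℝ, 0 ≤ K t s)
    (hK_bdd : ∀ R > (0:ℝ), ∃ C : ℝ, ∀ t ∈ Set.Icc (-R) R, ∀ s ∈ Set.Icc (-R) R, K t s ≤ C)
    (hK_supp : ∀ t s : ℝ, (s < 0 ∨ t < s) → K t s = 0)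
    (hK_int : ∀ t > (0:ℝ), IntervalIntegrable (fun s => K t s) MeasureTheory.volume 0 t)
    (hK_inc : StrictMonoOn (fun t => ∫ s in (0:ℝ)..t, K t s) (Set.Ici 0))
    (G : ℝ → ℝ)
    (hG_cont : ContinuousOn G (Set.Ici 0))
    (hG_mono : StrictMonoOn G (Set.Ici 0))
    (hG_nonneg : ∀ y ≥ (0:ℝ), 0 ≤ G y)
    (hG0 : G 0 = 0)
    (hG_unb0 : ∀ δ > (0:ℝ), ∀ M > (0:ℝ), ∃ y : ℝ, 0 < y ∧ y < δ ∧ G y > M * y)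
    (yseq : ℕ → ℝ)
    (hseq_pos : ∀ n, 0 < yseq n)
    (hseq_div : Filter.Tendsto yseq Filter.atTop Filter.atTop)
    (hseq_ratio : Filter.Tendsto (fun n => G (yseq n) / yseq n) Filter.atTop (nhds 0))
    (c₁ : ℝ) (hc₁ : 0 < c₁) (hc₁' : c₁ ≤ 1) :
    ∀ T > (0:ℝ), ∀ N : ℕ, ∀ t : ℕ → ℝ,
      t 0 = 0 → t N = T → (∀ n < N, t n < t (n + 1)) →
      ∃ Z : ℕ → ℝ, (∀ n < N, 0 < Z n) ∧
        ∀ n < N, Z n = G ((∑ l ∈ Finset.range n,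
            Z l * ∫ s in (t l)..(t (l + 1)), K (t n + c₁ * (t (n + 1) - t n)) s)
          + Z n * ∫ s in (t n)..(t n + c₁ * (t (n + 1) - t n)),
              K (t n + c₁ * (t (n + 1) - t n)) s) :=
  prop3_unconditional_general K hK_nonneg hK_int hK_inc G hG_cont hG_mono hG0 hG_unb0 yseq hseq_div
    hseq_ratio c₁ hc₁
end
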